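/- arXiv:1903.06595 — 7 statements merged into one kernel-verified Lean document; each statement's English description precedes it below -/
import Mathlib

section
/- Let n ≥ 2. Then 2·R_n < T_n, where R_n is the number of chambers of the rank-n resonance arrangement and T_n is the number of chambers of the threshold arrangement in ℝ^{n+1}. (Upper bound of Theorem 1.3: every chamber of the resonance arrangement, viewed as a wall of the threshold arrangement lying in the hyperplane V_∅, lies on the boundary of exactly two threshold chambers, and the inequality is strict.) -/
open Finset

/-- The complement of the resonance arrangement: points of the hyperplane
`V_∅ = {x : Σ x i = 0}` in `ℝ^{n+1}` lying on none of the hyperplanes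
`U'_S = {x ∈ V_∅ : Σ_{i ∈ S} x i = 0}` for nonempty `S ⊆ [n]`
(subsets avoiding the last coordinate). -/
def resCompl (n : ℕ) : Set (Fin (n + 1) → ℝ) :=
  {x | (∑ i, x i = 0) ∧
    ∀ S : Finset (Fin (n + 1)), S.Nonempty → Fin.last n ∉ S → ∑ i ∈ S, x i ≠ 0}

/-- The complement of the threshold arrangement in `ℝ^{n+1}`: points lying on none of
the hyperplanes with normal vector `v_S` (entries `+1` on `S ⊆ [n]`, `-1` elsewhere,
so the last entry is `-1`). -/
def thCompl (n : ℕ) : Set (Fin (n + 1) → ℝ) :=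
  {x | ∀ S : Finset (Fin (n + 1)), Fin.last n ∉ S →
    (∑ i, x i * (if i ∈ S then (1 : ℝ) else -1)) ≠ 0}

/-!
Both complements are complements of finitely many linear hyperplanes in a convex set, so their
chambers correspond to the sign vectors realized on them. Moving a point `x` of a resonance
chamber off `V_∅` by a small multiple of `(1, …, 1)` keeps the sign of
`⟨x, v_S⟩ = 2 ⟨x, u_S⟩` for `S ≠ ∅` and gives `⟨x, v_∅⟩ = -Σ x_i` either sign, so each resonance
chamber yields two threshold chambers, all of them distinct. The point `(1, …, 1, n - 1)` lies in
yet another threshold chamber: its signs would force `x_i < 0` for all `i ≤ n` together with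
`x_1 + ⋯ + x_n > 0`.
-/

open Filter Topology

section SignVector

variable {V ι : Type*} [AddCommGroup V] [Module ℝ V] [TopologicalSpace V]

def arrangementCompl (E : Set V) (f : ι → V →L[ℝ] ℝ) : Set V :=
  {x | x ∈ E ∧ ∀ i, f i x ≠ 0}

noncomputable def signVector (f : ι → V →L[ℝ] ℝ) (x : V) : ι → Bool :=
  fun i => decide (0 < f i x)

lemma decide_pos_eq_of_mul_pos {a b : ℝ} (h : 0 < a * b) :
    decide (0 < a) = decide (0 < b) := by
  rcases mul_pos_iff.1 h with ⟨ha, hb⟩ | ⟨ha, hb⟩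
  · simp [ha, hb]
  · simp [ha.not_gt, hb.not_gt]

lemma mul_pos_of_decide_pos_eq {a b : ℝ} (ha : a ≠ 0) (hb : b ≠ 0)
    (h : decide (0 < a) = decide (0 < b)) : 0 < a * b := by
  rcases ha.lt_or_gt with ha | ha <;> rcases hb.lt_or_gt with hb | hb
  · exact mul_pos_of_neg_of_neg ha hb
  · simp [ha.not_gt, hb] at h
  · simp [ha, hb.not_gt] at h
  · exact mul_pos ha hb

lemma eventually_forall_mul_pos [Finite ι] (f : ι → V →L[ℝ] ℝ) {x : V} (hx : ∀ i, f i x ≠ 0) :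
    ∀ᶠ y in 𝓝 x, ∀ i, 0 < f i x * f i y :=
  eventually_all.2 fun i => ((continuous_const.mul (f i).continuous).tendsto x).eventually
    (lt_mem_nhds (mul_self_pos.2 (hx i)))

variable {E : Set V} {f : ι → V →L[ℝ] ℝ}

lemma continuous_signVector_arrangementCompl :
    Continuous fun x : arrangementCompl E f => signVector f x := by
  refine continuous_pi fun i => continuous_discrete_rng.2 fun b => ?_
  have hf : Continuous fun x : arrangementCompl E f => f i x :=
    (f i).continuous.comp continuous_subtype_val
  cases b
  · convert isOpen_lt hf (continuous_const (y := (0 : ℝ))) using 1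
    ext x
    simp [signVector, (x.2.2 i).le_iff_lt]
  · convert isOpen_lt (continuous_const (y := (0 : ℝ))) hf using 1
    ext x
    simp [signVector]

lemma connectedComponent_eq_of_signVector_eq [ContinuousAdd V] [ContinuousSMul ℝ V]
    (hE : Convex ℝ E) {x y : arrangementCompl E f}
    (h : signVector f x = signVector f y) : connectedComponent x = connectedComponent y := by
  let C : Set V := E ∩ ⋂ i, {p | 0 < f i x * f i p}
  have hC : Convex ℝ C :=
    hE.inter (convex_iInter fun i => convex_halfSpace_gt ((f i x • f i).isLinear) 0)
  have hmem : ∀ p : arrangementCompl E f, signVector f x = signVector f p → p.1 ∈ C :=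
    fun p hp => ⟨p.2.1, Set.mem_iInter.2 fun i =>
      mul_pos_of_decide_pos_eq (x.2.2 i) (p.2.2 i) (congrFun hp i)⟩
  have hCX : C ⊆ Set.range ((↑) : arrangementCompl E f → V) := by
    intro p hp
    refine ⟨⟨p, hp.1, fun i => ?_⟩, rfl⟩
    exact right_ne_zero_of_mul (Set.mem_iInter.1 hp.2 i).ne'
  have hpre : IsPreconnected ((↑) ⁻¹' C : Set (arrangementCompl E f)) := by
    rw [← Topology.IsInducing.subtypeVal.isPreconnected_image,
      Set.image_preimage_eq_of_subset hCX]
    exact hC.isPreconnected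
  exact connectedComponent_eq (hpre.subset_connectedComponent (hmem x rfl) (hmem y h))

theorem card_connectedComponents_arrangementCompl [ContinuousAdd V] [ContinuousSMul ℝ V]
    (hE : Convex ℝ E) :
    Nat.card (ConnectedComponents (arrangementCompl E f)) =
      Nat.card (signVector f '' arrangementCompl E f) := by
  have hcont := continuous_signVector_arrangementCompl (E := E) (f := f)
  have hinj : Function.Injective hcont.connectedComponentsLift := by
    intro a b hab
    obtain ⟨x, rfl⟩ := ConnectedComponents.surjective_coe a
    obtain ⟨y, rfl⟩ := ConnectedComponents.surjective_coe b
    rw [hcont.connectedComponentsLift_apply_coe, hcont.connectedComponentsLift_apply_coe] at hab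
    exact ConnectedComponents.coe_eq_coe.2 (connectedComponent_eq_of_signVector_eq hE hab)
  rw [← Nat.card_range_of_injective hinj, Set.image_eq_range,
    ← ConnectedComponents.surjective_coe.range_comp, hcont.connectedComponentsLift_comp_coe]

end SignVector

section Threshold

variable {n : ℕ}

def coordSum {ι : Type*} (S : Finset ι) : (ι → ℝ) →L[ℝ] ℝ :=
  ∑ i ∈ S, ContinuousLinearMap.proj i

@[simp]
lemma coordSum_apply {ι : Type*} (S : Finset ι) (x : ι → ℝ) : coordSum S x = ∑ i ∈ S, x i := by
  simp [coordSum]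

abbrev ThIndex (n : ℕ) := {S : Finset (Fin (n + 1)) // Fin.last n ∉ S}

abbrev ResIndex (n : ℕ) := {S : Finset (Fin (n + 1)) // S.Nonempty ∧ Fin.last n ∉ S}

def resForm (n : ℕ) (S : ResIndex n) : (Fin (n + 1) → ℝ) →L[ℝ] ℝ :=
  coordSum S.1

def thForm (n : ℕ) (S : ThIndex n) : (Fin (n + 1) → ℝ) →L[ℝ] ℝ :=
  2 • coordSum S.1 - coordSum univ

lemma thForm_apply (S : ThIndex n) (x : Fin (n + 1) → ℝ) :
    thForm n S x = 2 * ∑ i ∈ S.1, x i - ∑ i, x i := by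
  simp [thForm, two_smul, two_mul]

lemma sum_mul_sign_eq_thForm (S : ThIndex n) (x : Fin (n + 1) → ℝ) :
    ∑ i, x i * (if i ∈ S.1 then (1 : ℝ) else -1) = thForm n S x := by
  have h : ∀ i, x i * (if i ∈ S.1 then (1 : ℝ) else -1) = 2 * (if i ∈ S.1 then x i else 0) - x i :=
    fun i => by split_ifs <;> ring
  rw [thForm_apply, sum_congr rfl fun i _ => h i, sum_sub_distrib, ← mul_sum, sum_ite_mem,
    univ_inter]

lemma thCompl_eq : thCompl n = arrangementCompl Set.univ (thForm n) := by
  ext x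
  simp only [thCompl, arrangementCompl, Set.mem_univ, true_and, Subtype.forall]
  exact forall₂_congr fun S hS => by rw [sum_mul_sign_eq_thForm ⟨S, hS⟩]

def zeroSumPlane (n : ℕ) : Set (Fin (n + 1) → ℝ) :=
  {x | ∑ i, x i = 0}

lemma convex_zeroSumPlane : Convex ℝ (zeroSumPlane n) := by
  simpa [zeroSumPlane] using convex_hyperplane (coordSum univ).isLinear (0 : ℝ)

lemma resCompl_eq :
    resCompl n = arrangementCompl (zeroSumPlane n) (resForm n) := by
  ext x
  simp [resCompl, arrangementCompl, resForm, zeroSumPlane]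

lemma thForm_apply_of_mem_zeroSumPlane {x : Fin (n + 1) → ℝ} (hx : x ∈ zeroSumPlane n)
    (S : ThIndex n) : thForm n S x = 2 * ∑ i ∈ S.1, x i := by
  rw [thForm_apply, hx.out, sub_zero]

lemma thForm_apply_of_eq_empty {S : ThIndex n} (hS : S.1 = ∅) (x : Fin (n + 1) → ℝ) :
    thForm n S x = -∑ i, x i := by
  rw [thForm_apply, hS, sum_empty, mul_zero, zero_sub]

-- The entry at `S = ∅`, the sign of `⟨·, v_∅⟩ = -Σ x_i`, records the side of `V_∅`.
def extendSign (v : ResIndex n → Bool) (b : Bool) : ThIndex n → Bool :=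
  fun S => if h : S.1.Nonempty then v ⟨S.1, h, S.2⟩ else b

lemma extendSign_injective : Function.Injective (Function.uncurry (extendSign (n := n))) := by
  rintro ⟨v, b⟩ ⟨w, c⟩ h
  have hb : b = c := by simpa [extendSign] using congrFun h ⟨∅, notMem_empty _⟩
  have hv : v = w := funext fun S => by simpa [extendSign, S.2.1] using congrFun h ⟨S.1, S.2.2⟩
  rw [hv, hb]

lemma extendSign_mem_image {v : ResIndex n → Bool}
    (hv : v ∈ signVector (resForm n) '' arrangementCompl (zeroSumPlane n) (resForm n))
    (b : Bool) :
    extendSign v b ∈ signVector (thForm n) '' arrangementCompl Set.univ (thForm n) := by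
  obtain ⟨x, ⟨hx0, hxS⟩, rfl⟩ := hv
  have hnear := eventually_forall_mul_pos (fun S : ResIndex n => thForm n ⟨S.1, S.2.2⟩) (x := x)
    fun S => by simpa [thForm_apply_of_mem_zeroSumPlane hx0, resForm] using hxS S
  set s : ℝ := if b then 1 else -1
  have hline : Tendsto (fun r : ℝ => x - (s * r) • (1 : Fin (n + 1) → ℝ)) (𝓝[>] 0) (𝓝 x) := by
    have : Continuous fun r : ℝ => x - (s * r) • (1 : Fin (n + 1) → ℝ) := by fun_prop
    simpa using (this.tendsto 0).mono_left nhdsWithin_le_nhds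
  obtain ⟨r, hpos, hr⟩ := ((hline.eventually hnear).and self_mem_nhdsWithin).exists
  set y := x - (s * r) • (1 : Fin (n + 1) → ℝ)
  have hempty : ∀ S : ThIndex n, S.1 = ∅ → thForm n S y = (n + 1) * s * r := fun S hS => by
    simp [thForm_apply_of_eq_empty hS, y, sum_sub_distrib, hx0.out]
    ring
  have hnonempty : ∀ S : ThIndex n, (h : S.1.Nonempty) →
      0 < 2 * resForm n ⟨S.1, h, S.2⟩ x * thForm n S y := fun S h => by
    simpa [thForm_apply_of_mem_zeroSumPlane hx0, resForm] using hpos ⟨S.1, h, S.2⟩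
  refine ⟨y, ⟨Set.mem_univ y, fun S => ?_⟩, funext fun S => ?_⟩
  · by_cases h : S.1.Nonempty
    · exact right_ne_zero_of_mul (hnonempty S h).ne'
    · rw [hempty S (not_nonempty_iff_eq_empty.1 h)]
      have : s ≠ 0 := by positivity
      positivity
  · by_cases h : S.1.Nonempty
    · simp only [signVector, extendSign, dif_pos h]
      rw [← decide_pos_eq_of_mul_pos (hnonempty S h)]
      simp
    · simp only [signVector, extendSign, dif_neg h, hempty S (not_nonempty_iff_eq_empty.1 h)]
      cases b <;> simp [s] <;> nlinarith [(n.cast_nonneg : (0 : ℝ) ≤ n)]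

noncomputable def detachedPoint (n : ℕ) : Fin (n + 1) → ℝ :=
  fun i => if i = Fin.last n then (n : ℝ) - 1 else 1

lemma thForm_detachedPoint (S : ThIndex n) :
    thForm n S (detachedPoint n) = 2 * S.1.card - 2 * n + 1 := by
  have hS : ∑ i ∈ S.1, detachedPoint n i = S.1.card := by
    have h1 : ∀ i ∈ S.1, detachedPoint n i = 1 := fun i hi =>
      if_neg fun h : i = Fin.last n => S.2 (h ▸ hi)
    rw [sum_congr rfl h1]
    simp
  have huniv : ∑ i, detachedPoint n i = 2 * n - 1 := by
    simp [Fin.sum_univ_castSucc, detachedPoint, Fin.castSucc_ne_last]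
    ring
  rw [thForm_apply, hS, huniv]
  ring

lemma detachedPoint_mem : detachedPoint n ∈ arrangementCompl Set.univ (thForm n) := by
  refine ⟨Set.mem_univ _, fun S h => ?_⟩
  rw [thForm_detachedPoint] at h
  have : ((2 * S.1.card + 1 : ℕ) : ℝ) = ((2 * n : ℕ) : ℝ) := by push_cast; linarith
  have := Nat.cast_injective this
  omega

lemma extendSign_ne_signVector_detachedPoint (hn : 2 ≤ n) {x : Fin (n + 1) → ℝ}
    (hx : x ∈ arrangementCompl (zeroSumPlane n) (resForm n)) (b : Bool) :
    extendSign (signVector (resForm n) x) b ≠ signVector (thForm n) (detachedPoint n) := by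
  intro h
  have hsign : ∀ S : ResIndex n,
      decide (0 < ∑ i ∈ S.1, x i) = decide (0 < thForm n ⟨S.1, S.2.2⟩ (detachedPoint n)) :=
    fun S => by simpa [extendSign, signVector, resForm, S.2.1] using congrFun h ⟨S.1, S.2.2⟩
  have hneg : ∀ i ∈ univ.erase (Fin.last n), x i < 0 := by
    intro i hi
    have hlast : Fin.last n ∉ ({i} : Finset _) := by simpa [eq_comm] using ne_of_mem_erase hi
    have hsi := hsign ⟨{i}, singleton_nonempty i, hlast⟩
    have hxi := hx.2 ⟨{i}, singleton_nonempty i, hlast⟩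
    have hn' : (2 : ℝ) ≤ n := by exact_mod_cast hn
    simp only [resForm, coordSum_apply, sum_singleton, thForm_detachedPoint, card_singleton] at hsi hxi
    have : ¬ 0 < 2 * (1 : ℝ) - 2 * n + 1 := by linarith
    simp only [Nat.cast_one, this, decide_false, decide_eq_false_iff_not, not_lt] at hsi
    exact lt_of_le_of_ne hsi hxi
  have hlast : Fin.last n ∉ univ.erase (Fin.last n) := notMem_erase _ _
  have hne : (univ.erase (Fin.last n)).Nonempty := ⟨0, by simp [Fin.ext_iff]; omega⟩
  have hpos := hsign ⟨_, hne, hlast⟩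
  simp only [thForm_detachedPoint, card_erase_of_mem (mem_univ _), card_univ, Fintype.card_fin,
    Nat.add_sub_cancel] at hpos
  simp only [show (0 : ℝ) < 2 * n - 2 * n + 1 by linarith, decide_true, decide_eq_true_eq] at hpos
  exact (sum_neg hneg hne).not_gt hpos

theorem two_mul_card_signVector_resForm_lt (hn : 2 ≤ n) :
    2 * Nat.card (signVector (resForm n) ''
        arrangementCompl (zeroSumPlane n) (resForm n)) <
      Nat.card (signVector (thForm n) '' arrangementCompl Set.univ (thForm n)) := by
  set B := signVector (resForm n) '' arrangementCompl (zeroSumPlane n) (resForm n)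
  set A := signVector (thForm n) '' arrangementCompl Set.univ (thForm n)
  let F : B × Bool → A := fun p => ⟨extendSign p.1 p.2, extendSign_mem_image p.1.2 p.2⟩
  have hF : Function.Injective F := fun p q h => by
    have := extendSign_injective (a₁ := (p.1.1, p.2)) (a₂ := (q.1.1, q.2))
      (congrArg Subtype.val h)
    rw [Prod.mk.injEq] at this
    exact Prod.ext (Subtype.ext this.1) this.2
  have hz : ⟨_, Set.mem_image_of_mem _ detachedPoint_mem⟩ ∉ Set.range F := by
    rintro ⟨⟨⟨v, x, hx, rfl⟩, b⟩, h⟩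
    exact extendSign_ne_signVector_detachedPoint hn hx b (congrArg Subtype.val h)
  have := Fintype.ofFinite A
  have := Fintype.ofFinite B
  calc 2 * Nat.card B = Fintype.card (B × Bool) := by
        simp [Nat.card_eq_fintype_card, mul_comm]
    _ < Fintype.card A := Fintype.card_lt_of_injective_of_notMem F hF hz
    _ = Nat.card A := Nat.card_eq_fintype_card.symm

end Threshold

/-- upper bound of Theorem 1.3. For `n ≥ 2`, twice the number `R_n`
of chambers of the rank-`n` resonance arrangement is strictly less than the number
`T_n` of chambers of the threshold arrangement in `ℝ^{n+1}`. -/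
theorem two_mul_resonance_lt_threshold (n : ℕ) (hn : 2 ≤ n) :
    2 * Nat.card (ConnectedComponents ↥(resCompl n)) <
      Nat.card (ConnectedComponents ↥(thCompl n)) := by
  rw [resCompl_eq, thCompl_eq, card_connectedComponents_arrangementCompl convex_zeroSumPlane,
    card_connectedComponents_arrangementCompl convex_univ]
  exact two_mul_card_signVector_resForm_lt hn
end

section
/- Let T and T' be alternating trees on [n]. (1) Every nonnegative circulation h on the directed graph C(T,T') induces a point x ∈ 𝒞(T) ∩ 𝒞(T'): namely, x = Σ_{(i,j)∈E(T)} h(i,j)(e_i − e_j) lies in both root cones, where h is restricted to the arcs of C(T,T') coming from T. (2) The intersection 𝒞(T) ∩ 𝒞(T') is full-dimensional (of dimension n − 1) if and only if there exists a strictly positive circulation on C(T,T'). (Lemma 2.10.) -/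
open Finset

/-- The root `e_i - e_j ∈ ℝ^n` associated to the arc `a = (i, j)`. -/
def rootVec (n : ℕ) (a : Fin n × Fin n) : Fin n → ℝ :=
  fun k => (if k = a.1 then 1 else 0) - (if k = a.2 then 1 else 0)

/-- The underlying undirected (simple) graph of the directed graph on `[n]`
with arc set `E`. -/
def underlying (n : ℕ) (E : Finset (Fin n × Fin n)) : SimpleGraph (Fin n) where
  Adj i j := i ≠ j ∧ ((i, j) ∈ E ∨ (j, i) ∈ E)
  symm := ⟨fun _ _ h => ⟨h.1.symm, h.2.symm⟩⟩
  loopless := ⟨fun _ h => h.1 rfl⟩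

/-- A directed graph on `[n]` is alternating if every vertex is a source
(no incoming arcs) or a sink (no outgoing arcs). -/
def IsAlternating (n : ℕ) (E : Finset (Fin n × Fin n)) : Prop :=
  ∀ v : Fin n, (∀ a ∈ E, a.2 ≠ v) ∨ (∀ a ∈ E, a.1 ≠ v)

/-- An alternating tree on `[n]`: an alternating directed graph whose underlying
undirected graph is a tree. -/
def IsAltTree (n : ℕ) (E : Finset (Fin n × Fin n)) : Prop :=
  IsAlternating n E ∧ (underlying n E).IsTree

/-- The root cone of a directed graph `G` on `[n]` with arc set `E`: all points
induced by nonnegative flows on the arcs, `Σ_{(i,j) ∈ E} f(i,j)(e_i - e_j)`. -/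
def rootCone (n : ℕ) (E : Finset (Fin n × Fin n)) : Set (Fin n → ℝ) :=
  {x | ∃ f : Fin n × Fin n → ℝ, (∀ a, 0 ≤ f a) ∧ x = ∑ a ∈ E, f a • rootVec n a}

/-- The directed graph `C(T,T')` on `[n]`: the arcs of `T` together with the
reversed arcs of `T'`. -/
def ctt (n : ℕ) (E E' : Finset (Fin n × Fin n)) : Finset (Fin n × Fin n) :=
  E ∪ E'.image Prod.swap

/-- A nonnegative circulation on the directed graph with arc set `F`:
a nonnegative labeling of arcs satisfying conservation of flow at each vertex. -/
def IsCirculation (n : ℕ) (F : Finset (Fin n × Fin n)) (h : Fin n × Fin n → ℝ) : Prop :=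
  (∀ a ∈ F, 0 ≤ h a) ∧
  ∀ v : Fin n, ∑ a ∈ F.filter (fun a => a.1 = v), h a
    = ∑ a ∈ F.filter (fun a => a.2 = v), h a

/-! Conservation of flow for the flow on `C(T,T')` that carries `f` on the arcs of `T` and `g` on
the reversed arcs of `T'` says exactly `∑_{a ∈ T} f a (e_i - e_j) = ∑_{b ∈ T'} g b (e_i - e_j)`, so
nonnegative circulations are points of `𝒞(T) ∩ 𝒞(T')` together with their coordinates in both
cones. The roots of an alternating tree form a basis of `V_∅`, so both cones are simplicial.
If the intersection spans `V_∅`, no coordinate vanishes on all of it, and summing circulations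
positive at each arc gives a strictly positive one. Conversely, a point whose coordinates are
all positive in both bases is interior to both cones, so it can be moved in every direction
of `V_∅` without leaving the intersection. -/

open Filter Topology

section RootVectors

variable {n : ℕ}

lemma rootVec_swap (a : Fin n × Fin n) : rootVec n a.swap = -rootVec n a := by
  funext k
  simp only [rootVec, Prod.fst_swap, Prod.snd_swap, Pi.neg_apply]
  ring

lemma rootVec_self (i : Fin n) : rootVec n (i, i) = 0 := by
  funext k
  simp [rootVec]

lemma rootVec_add_rootVec (i j k : Fin n) :
    rootVec n (i, j) + rootVec n (j, k) = rootVec n (i, k) := by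
  funext m
  simp only [rootVec, Pi.add_apply]
  ring

lemma sum_smul_rootVec_apply (F : Finset (Fin n × Fin n)) (h : Fin n × Fin n → ℝ) (v : Fin n) :
    (∑ a ∈ F, h a • rootVec n a) v =
      ∑ a ∈ F.filter (fun a => a.1 = v), h a - ∑ a ∈ F.filter (fun a => a.2 = v), h a := by
  simp only [Finset.sum_apply, Pi.smul_apply, rootVec, smul_eq_mul, mul_sub, mul_ite, mul_one,
    mul_zero, Finset.sum_sub_distrib, Finset.sum_filter, eq_comm]

lemma isCirculation_iff {F : Finset (Fin n × Fin n)} {h : Fin n × Fin n → ℝ} :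
    IsCirculation n F h ↔ (∀ a ∈ F, 0 ≤ h a) ∧ ∑ a ∈ F, h a • rootVec n a = 0 := by
  simp only [IsCirculation, funext_iff, sum_smul_rootVec_apply, Pi.zero_apply, sub_eq_zero]

lemma IsCirculation.sum {ι : Type*} {F : Finset (Fin n × Fin n)} (s : Finset ι)
    {h : ι → Fin n × Fin n → ℝ} (hh : ∀ i ∈ s, IsCirculation n F (h i)) :
    IsCirculation n F (∑ i ∈ s, h i) := by
  simp only [isCirculation_iff, Finset.sum_apply] at hh ⊢
  refine ⟨fun a ha => Finset.sum_nonneg fun i hi => (hh i hi).1 a ha, ?_⟩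
  simp only [Finset.sum_smul]
  rw [Finset.sum_comm]
  exact Finset.sum_eq_zero fun i hi => (hh i hi).2

lemma mem_rootCone_iff {E : Finset (Fin n × Fin n)} {x : Fin n → ℝ} :
    x ∈ rootCone n E ↔ ∃ f : Fin n × Fin n → ℝ, (∀ a ∈ E, 0 ≤ f a) ∧
      x = ∑ a ∈ E, f a • rootVec n a := by
  refine ⟨fun ⟨f, hf, hx⟩ => ⟨f, fun a _ => hf a, hx⟩, fun ⟨f, hf, hx⟩ => ?_⟩
  refine ⟨fun a => max (f a) 0, fun a => le_max_right _ _, hx.trans ?_⟩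
  exact Finset.sum_congr rfl fun a ha => by simp only [max_eq_left (hf a ha)]

end RootVectors

section SumZero

variable {n : ℕ}

/-- The hyperplane `V_∅ = {x | ∑ i, x i = 0}`. -/
def sumZero (n : ℕ) : Submodule ℝ (Fin n → ℝ) :=
  LinearMap.ker (∑ i : Fin n, LinearMap.proj i)

lemma mem_sumZero {x : Fin n → ℝ} : x ∈ sumZero n ↔ ∑ i, x i = 0 := by
  simp [sumZero]

lemma finrank_sumZero : Module.finrank ℝ (sumZero n) = n - 1 := by
  rcases Nat.eq_zero_or_pos n with rfl | hn
  · exact Nat.le_zero.mp ((Submodule.finrank_le _).trans_eq (by simp))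
  · have hne : (∑ i : Fin n, LinearMap.proj i : Module.Dual ℝ (Fin n → ℝ)) ≠ 0 := fun h0 => by
      simpa [hn.ne'] using LinearMap.congr_fun h0 (fun _ => 1)
    have := Module.Dual.finrank_ker_add_one_of_ne_zero hne
    rw [Module.finrank_fin_fun] at this
    exact Nat.eq_sub_of_add_eq this

lemma rootVec_mem_sumZero (a : Fin n × Fin n) : rootVec n a ∈ sumZero n := by
  simp [mem_sumZero, rootVec, Finset.sum_sub_distrib]

lemma rootCone_subset_sumZero (E : Finset (Fin n × Fin n)) : rootCone n E ⊆ sumZero n := by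
  rintro x ⟨f, -, rfl⟩
  exact Submodule.sum_mem _ fun a _ => Submodule.smul_mem _ _ (rootVec_mem_sumZero a)

lemma finrank_span_eq_iff {S : Set (Fin n → ℝ)} (hS : S ⊆ sumZero n) :
    Module.finrank ℝ (Submodule.span ℝ S) = n - 1 ↔ Submodule.span ℝ S = sumZero n := by
  refine ⟨fun h => ?_, fun h => by rw [h, finrank_sumZero]⟩
  exact Submodule.eq_of_le_of_finrank_eq (Submodule.span_le.mpr hS) (by rw [h, finrank_sumZero])

end SumZero

section Trees

variable {n : ℕ} {E : Finset (Fin n × Fin n)}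

lemma IsAlternating.fst_ne_snd (hE : IsAlternating n E) {a : Fin n × Fin n} (ha : a ∈ E) :
    a.1 ≠ a.2 := by
  rcases hE a.1 with H | H
  · exact fun h => H a ha h.symm
  · exact absurd rfl (H a ha)

lemma IsAlternating.swap_notMem (hE : IsAlternating n E) {a : Fin n × Fin n} (ha : a ∈ E) :
    a.swap ∉ E := by
  intro hsw
  rcases hE a.1 with H | H
  · exact H _ hsw rfl
  · exact H _ ha rfl

/-- `(i, j) ↦ s(i, j)` maps the arcs of an alternating graph bijectively onto the edges of
its underlying graph, since there are no loops and no pairs of opposite arcs. -/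
lemma IsAltTree.card_eq (hT : IsAltTree n E) : E.card = n - 1 := by
  classical
  have hcard : E.card = (underlying n E).edgeFinset.card := by
    refine Finset.card_bij (fun a _ => s(a.1, a.2)) (fun a ha => ?_) (fun a ha b hb hab => ?_) ?_
    · rw [SimpleGraph.mem_edgeFinset, SimpleGraph.mem_edgeSet]
      exact ⟨hT.1.fst_ne_snd ha, Or.inl ha⟩
    · rcases Sym2.mk_eq_mk_iff.mp hab with h | h
      · exact h
      · exact absurd (h ▸ ha) (hT.1.swap_notMem hb)
    · refine Sym2.ind fun i j he => ?_
      rw [SimpleGraph.mem_edgeFinset, SimpleGraph.mem_edgeSet] at he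
      obtain ⟨-, hij | hji⟩ := he
      · exact ⟨(i, j), hij, rfl⟩
      · exact ⟨(j, i), hji, Sym2.eq_swap⟩
  have := hT.2.card_edgeFinset
  rw [Fintype.card_fin] at this
  omega

/-- Along a walk `i = v₀, v₁, …, v_k = j` in the underlying graph,
`e_i - e_j = ∑ (e_{v_t} - e_{v_{t+1}})` with each summand `± rootVec` of an arc. -/
lemma span_rootVec_eq_sumZero (hE : (underlying n E).Connected) :
    Submodule.span ℝ (rootVec n '' E) = sumZero n := by
  refine le_antisymm (Submodule.span_le.mpr ?_) fun x hx => ?_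
  · rintro _ ⟨a, -, rfl⟩
    exact rootVec_mem_sumZero a
  have hroot : ∀ i j, rootVec n (i, j) ∈ Submodule.span ℝ (rootVec n '' E) := by
    intro i j
    induction (hE i j).some with
    | nil => simp [rootVec_self]
    | @cons i k j hadj _ ih =>
      rw [← rootVec_add_rootVec i k j]
      refine Submodule.add_mem _ ?_ ih
      rcases hadj.2 with hik | hki
      · exact Submodule.subset_span ⟨_, hik, rfl⟩
      · rw [← Prod.swap_swap (i, k), rootVec_swap]
        exact Submodule.neg_mem _ (Submodule.subset_span ⟨_, hki, rfl⟩)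
  obtain ⟨v⟩ := hE.nonempty
  have hx_eq : x = ∑ i, x i • rootVec n (i, v) := by
    funext k
    have := mem_sumZero.mp hx
    by_cases hk : k = v <;>
      simp [rootVec, Finset.sum_apply, mul_sub, Finset.sum_sub_distrib, hk, this]
  rw [hx_eq]
  exact Submodule.sum_mem _ fun i _ => Submodule.smul_mem _ _ (hroot i v)

/-- The `n - 1` roots of the arcs of an alternating tree span the `(n - 1)`-dimensional
space `sumZero n`, so they form a basis of it. -/
lemma IsAltTree.linearIndepOn (hT : IsAltTree n E) :
    LinearIndepOn ℝ (rootVec n) (E : Set (Fin n × Fin n)) := by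
  rw [LinearIndepOn, linearIndependent_iff_card_eq_finrank_span, ← Set.image_eq_range,
    Set.finrank, span_rootVec_eq_sumZero hT.2.connected, finrank_sumZero]
  simpa using hT.card_eq

end Trees

section Cones

variable {n : ℕ} {E : Finset (Fin n × Fin n)}

/-- If every point of `rootCone n E ∩ S` had zero coefficient at `a`, the span of that set would
miss `rootVec n a`, which is independent of the other roots of `E`. -/
lemma exists_coeff_pos_of_mem_span (hE : LinearIndepOn ℝ (rootVec n) (E : Set (Fin n × Fin n)))
    {a : Fin n × Fin n} (ha : a ∈ E) {S : Set (Fin n → ℝ)}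
    (hspan : rootVec n a ∈ Submodule.span ℝ (rootCone n E ∩ S)) :
    ∃ f : Fin n × Fin n → ℝ, (∀ p, 0 ≤ f p) ∧ 0 < f a ∧ ∑ p ∈ E, f p • rootVec n p ∈ S := by
  by_contra! hcon
  have hsub : rootCone n E ∩ S ⊆ Submodule.span ℝ (rootVec n '' ↑(E.erase a)) := by
    rintro x ⟨⟨f, hf, rfl⟩, hS⟩
    have hfa : f a = 0 := le_antisymm (not_lt.mp fun h => hcon f hf h hS) (hf a)
    rw [← Finset.sum_erase _ (by rw [hfa, zero_smul])]
    exact Submodule.sum_mem _ fun p hp =>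
      Submodule.smul_mem _ _ (Submodule.subset_span ⟨p, hp, rfl⟩)
  have hindep : LinearIndepOn ℝ (rootVec n) (insert a ↑(E.erase a)) := by
    rwa [← Finset.coe_insert, Finset.insert_erase ha]
  exact ((hE.mono (by simp)).notMem_span_iff.mpr ⟨hindep, by simp⟩)
    (Submodule.span_le.mpr hsub hspan)

lemma eventually_add_smul_mem_rootCone {f : Fin n × Fin n → ℝ} (hf : ∀ a ∈ E, 0 < f a)
    {y : Fin n → ℝ} (hy : y ∈ Submodule.span ℝ (rootVec n '' E)) :
    ∀ᶠ ε in 𝓝 (0 : ℝ), ∑ a ∈ E, f a • rootVec n a + ε • y ∈ rootCone n E := by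
  obtain ⟨c, rfl⟩ := (Submodule.mem_span_image_finset_iff_exists_fun' ℝ).mp hy
  have hpos : ∀ᶠ ε in 𝓝 (0 : ℝ), ∀ a ∈ E, 0 < f a + ε * c a := by
    refine (eventually_all_finset E).mpr fun a ha => ?_
    have hcont : Continuous fun ε : ℝ => f a + ε * c a := by fun_prop
    exact continuousAt_const.eventually_lt hcont.continuousAt (by simpa using hf a ha)
  filter_upwards [hpos] with ε hε
  refine mem_rootCone_iff.mpr ⟨fun a => f a + ε * c a, fun a ha => (hε a ha).le, ?_⟩
  simp only [Finset.smul_sum, smul_smul, ← Finset.sum_add_distrib, add_smul]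

end Cones

section Circulations

variable {n : ℕ} {E E' : Finset (Fin n × Fin n)}

lemma mem_ctt {p : Fin n × Fin n} : p ∈ ctt n E E' ↔ p ∈ E ∨ p.swap ∈ E' := by
  simp [ctt, Prod.swap_eq_iff_eq_swap]

lemma subset_ctt_left : E ⊆ ctt n E E' := Finset.subset_union_left

/-- The flow on `C(T,T')` carrying `f` on the arcs of `T` and `g` on the reversed arcs of `T'`;
an arc in both gets `f + g`. -/
def cttFlow (E E' : Finset (Fin n × Fin n)) (f g : Fin n × Fin n → ℝ) (p : Fin n × Fin n) : ℝ :=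
  (if p ∈ E then f p else 0) + (if p.swap ∈ E' then g p.swap else 0)

lemma sum_cttFlow_smul_rootVec (f g : Fin n × Fin n → ℝ) :
    ∑ p ∈ ctt n E E', cttFlow E E' f g p • rootVec n p =
      ∑ a ∈ E, f a • rootVec n a - ∑ b ∈ E', g b • rootVec n b := by
  have hE : ∑ p ∈ ctt n E E', (if p ∈ E then f p else 0) • rootVec n p =
      ∑ a ∈ E, f a • rootVec n a := by
    simp only [ite_smul, zero_smul, ← Finset.sum_filter, Finset.filter_mem_eq_inter]
    rw [Finset.inter_eq_right.mpr subset_ctt_left]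
  have hE' : ∑ p ∈ ctt n E E', (if p.swap ∈ E' then g p.swap else 0) • rootVec n p =
      -∑ b ∈ E', g b • rootVec n b := by
    have hfilter : (ctt n E E').filter (fun p => p.swap ∈ E') = E'.image Prod.swap := by
      ext p
      simp only [Finset.mem_filter, mem_ctt, Finset.mem_image, Prod.swap_eq_iff_eq_swap,
        exists_eq_right]
      tauto
    rw [← Finset.sum_neg_distrib]
    simp only [ite_smul, zero_smul, ← Finset.sum_filter, hfilter,
      Finset.sum_image fun _ _ _ _ h => Prod.swap_injective h, Prod.swap_swap, rootVec_swap,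
      smul_neg]
  simp only [cttFlow, add_smul, Finset.sum_add_distrib, hE, hE', sub_eq_add_neg]

lemma cttFlow_nonneg {f g : Fin n × Fin n → ℝ} (hf : ∀ a ∈ E, 0 ≤ f a) (hg : ∀ b ∈ E', 0 ≤ g b)
    (p : Fin n × Fin n) : 0 ≤ cttFlow E E' f g p := by
  unfold cttFlow
  exact add_nonneg (by split_ifs with hp; exacts [hf p hp, le_rfl])
    (by split_ifs with hp; exacts [hg _ hp, le_rfl])

lemma isCirculation_cttFlow {f g : Fin n × Fin n → ℝ} (hf : ∀ a ∈ E, 0 ≤ f a)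
    (hg : ∀ b ∈ E', 0 ≤ g b)
    (heq : ∑ a ∈ E, f a • rootVec n a = ∑ b ∈ E', g b • rootVec n b) :
    IsCirculation n (ctt n E E') (cttFlow E E' f g) :=
  isCirculation_iff.mpr ⟨fun p _ => cttFlow_nonneg hf hg p,
    by rw [sum_cttFlow_smul_rootVec, heq, sub_self]⟩

lemma sum_smul_rootVec_eq_of_isCirculation {h f g : Fin n × Fin n → ℝ}
    (hc : IsCirculation n (ctt n E E') h) (hfg : ∀ p ∈ ctt n E E', h p = cttFlow E E' f g p) :
    ∑ a ∈ E, f a • rootVec n a = ∑ b ∈ E', g b • rootVec n b := by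
  rw [← sub_eq_zero, ← sum_cttFlow_smul_rootVec, ← (isCirculation_iff.mp hc).2]
  exact Finset.sum_congr rfl fun p hp => by rw [hfg p hp]

/-- A circulation `h` on `C(T,T')` splits as `f = h` on the arcs of `T` and, on the reversed arcs
of `T'` that are not arcs of `T`, `g = h`. -/
lemma sum_smul_rootVec_mem_inter {h : Fin n × Fin n → ℝ} (hc : IsCirculation n (ctt n E E') h) :
    ∑ a ∈ E, h a • rootVec n a ∈ rootCone n E ∩ rootCone n E' := by
  classical
  set g : Fin n × Fin n → ℝ := fun b => if b.swap ∈ E then 0 else h b.swap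
  have hsplit : ∀ p ∈ ctt n E E', h p = cttFlow E E' h g p := by
    intro p hp
    rcases mem_ctt.mp hp with hp | hp <;> by_cases hpE : p ∈ E <;> simp [cttFlow, g, hp, hpE]
  refine ⟨mem_rootCone_iff.mpr ⟨h, fun a ha => hc.1 a (subset_ctt_left ha), rfl⟩,
    mem_rootCone_iff.mpr ⟨g, fun b hb => ?_, sum_smul_rootVec_eq_of_isCirculation hc hsplit⟩⟩
  by_cases hbE : b.swap ∈ E
  · simp [g, hbE]
  · simpa [g, hbE] using hc.1 b.swap (mem_ctt.mpr (Or.inr (by simpa using hb)))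

end Circulations

section FullDimension

variable {n : ℕ} {E E' : Finset (Fin n × Fin n)}

/-- Arcs shared by `T` and the reversal of `T'` carry half of `h` on each side. -/
lemma exists_pos_eq_of_isCirculation {h : Fin n × Fin n → ℝ}
    (hc : IsCirculation n (ctt n E E') h) (hpos : ∀ p ∈ ctt n E E', 0 < h p) :
    ∃ f g : Fin n × Fin n → ℝ, (∀ a ∈ E, 0 < f a) ∧ (∀ b ∈ E', 0 < g b) ∧
      ∑ a ∈ E, f a • rootVec n a = ∑ b ∈ E', g b • rootVec n b := by
  classical
  set f : Fin n × Fin n → ℝ := fun p => if p.swap ∈ E' then h p / 2 else h p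
  set g : Fin n × Fin n → ℝ := fun b => if b.swap ∈ E then h b.swap / 2 else h b.swap
  refine ⟨f, g, fun a ha => ?_, fun b hb => ?_, sum_smul_rootVec_eq_of_isCirculation hc ?_⟩
  · have := hpos a (subset_ctt_left ha)
    simp only [f]
    split_ifs <;> positivity
  · have := hpos b.swap (mem_ctt.mpr (Or.inr (by simpa using hb)))
    simp only [g]
    split_ifs <;> positivity
  · intro p hp
    simp only [cttFlow, f, g, Prod.swap_swap]
    split_ifs <;> simp_all [mem_ctt]

lemma span_rootCone_inter_eq_sumZero {f g : Fin n × Fin n → ℝ} (hT : IsAltTree n E)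
    (hT' : IsAltTree n E') (hf : ∀ a ∈ E, 0 < f a) (hg : ∀ b ∈ E', 0 < g b)
    (heq : ∑ a ∈ E, f a • rootVec n a = ∑ b ∈ E', g b • rootVec n b) :
    Submodule.span ℝ (rootCone n E ∩ rootCone n E') = sumZero n := by
  refine le_antisymm (Submodule.span_le.mpr fun x hx => rootCone_subset_sumZero E hx.1) ?_
  rw [← span_rootVec_eq_sumZero hT.2.connected, Submodule.span_le]
  rintro _ ⟨a, -, rfl⟩
  set x := ∑ a ∈ E, f a • rootVec n a
  have hmem : ∀ᶠ ε in 𝓝 (0 : ℝ), x + ε • rootVec n a ∈ rootCone n E ∩ rootCone n E' := by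
    filter_upwards [eventually_add_smul_mem_rootCone hf
        ((span_rootVec_eq_sumZero hT.2.connected).symm ▸ rootVec_mem_sumZero a),
      eventually_add_smul_mem_rootCone hg
        ((span_rootVec_eq_sumZero hT'.2.connected).symm ▸ rootVec_mem_sumZero a)] with ε hε hε'
    exact ⟨hε, heq ▸ hε'⟩
  obtain ⟨ε, hε, hε0⟩ :=
    ((hmem.filter_mono nhdsWithin_le_nhds).and (self_mem_nhdsWithin (s := {0}ᶜ))).exists
  have hx : x ∈ rootCone n E ∩ rootCone n E' := by simpa using hmem.self_of_nhds
  have : rootVec n a = ε⁻¹ • ((x + ε • rootVec n a) - x) := by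
    rw [add_sub_cancel_left, smul_smul, inv_mul_cancel₀ hε0, one_smul]
  rw [SetLike.mem_coe, this]
  exact Submodule.smul_mem _ _ (Submodule.sub_mem _ (Submodule.subset_span hε)
    (Submodule.subset_span hx))

/-- For every arc `p` of `C(T,T')` some point of `𝒞(T) ∩ 𝒞(T')` has a positive coefficient
on the arc of `T` or of `T'` underlying `p`; its two cone representations give a circulation
positive at `p`, and the sum of these circulations over all `p` is strictly positive. -/
lemma exists_pos_isCirculation (hT : IsAltTree n E) (hT' : IsAltTree n E')
    (hspan : Submodule.span ℝ (rootCone n E ∩ rootCone n E') = sumZero n) :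
    ∃ h : Fin n × Fin n → ℝ, IsCirculation n (ctt n E E') h ∧ ∀ p ∈ ctt n E E', 0 < h p := by
  have hroot : ∀ a, rootVec n a ∈ Submodule.span ℝ (rootCone n E ∩ rootCone n E') :=
    fun a => hspan ▸ rootVec_mem_sumZero a
  have hlocal : ∀ p ∈ ctt n E E', ∃ h, IsCirculation n (ctt n E E') h ∧ 0 < h p := by
    intro p hp
    rcases mem_ctt.mp hp with hp | hp
    · obtain ⟨f, hf, hfp, hx⟩ := exists_coeff_pos_of_mem_span hT.linearIndepOn hp (hroot p)
      obtain ⟨g, hg, heq⟩ := mem_rootCone_iff.mp hx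
      refine ⟨_, isCirculation_cttFlow (fun a _ => hf a) hg heq, ?_⟩
      unfold cttFlow
      rw [if_pos hp]
      exact add_pos_of_pos_of_nonneg hfp (by split_ifs with h; exacts [hg _ h, le_rfl])
    · rw [Set.inter_comm] at hroot
      obtain ⟨g, hg, hgp, hx⟩ := exists_coeff_pos_of_mem_span hT'.linearIndepOn hp (hroot _)
      obtain ⟨f, hf, heq⟩ := mem_rootCone_iff.mp hx
      refine ⟨_, isCirculation_cttFlow hf (fun b _ => hg b) heq.symm, ?_⟩
      unfold cttFlow
      rw [if_pos hp]
      exact add_pos_of_nonneg_of_pos (by split_ifs with h; exacts [hf _ h, le_rfl]) hgp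
  choose! H hH hHpos using hlocal
  refine ⟨∑ q ∈ ctt n E E', H q, IsCirculation.sum _ hH, fun p hp => ?_⟩
  rw [Finset.sum_apply]
  exact Finset.sum_pos' (fun q hq => (hH q hq).1 p hp) ⟨p, hp, hHpos p hp⟩

end FullDimension

/-- Lemma 2.10. Let `T, T'` be alternating trees on `[n]` with arc
sets `E, E'`. (1) Every nonnegative circulation `h` on `C(T,T')` induces a point
`x = Σ_{(i,j) ∈ E(T)} h(i,j)(e_i - e_j)` lying in `𝒞(T) ∩ 𝒞(T')`. (2) The
intersection `𝒞(T) ∩ 𝒞(T')` is full-dimensional (of dimension `n - 1`) if and only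
if there exists a strictly positive circulation on `C(T,T')`. -/
theorem circulation_and_full_dim (n : ℕ) (E E' : Finset (Fin n × Fin n))
    (hT : IsAltTree n E) (hT' : IsAltTree n E') :
    (∀ h : Fin n × Fin n → ℝ, IsCirculation n (ctt n E E') h →
      (∑ a ∈ E, h a • rootVec n a) ∈ rootCone n E ∩ rootCone n E') ∧
    (Module.finrank ℝ (Submodule.span ℝ (rootCone n E ∩ rootCone n E')) = n - 1 ↔
      ∃ h : Fin n × Fin n → ℝ, IsCirculation n (ctt n E E') h ∧
        ∀ a ∈ ctt n E E', 0 < h a) := by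
  refine ⟨fun h hc => sum_smul_rootVec_mem_inter hc, ?_⟩
  rw [finrank_span_eq_iff fun x hx => rootCone_subset_sumZero E hx.1]
  refine ⟨exists_pos_isCirculation hT hT', fun ⟨h, hc, hpos⟩ => ?_⟩
  obtain ⟨f, g, hf, hg, heq⟩ := exists_pos_eq_of_isCirculation hc hpos
  exact span_rootCone_inter_eq_sumZero hT hT' hf hg heq
end

section
/- Suppose T and T' are alternating trees on [n] that are sign compatible, and let C = C(T,T'). Then for every nonempty proper subset I ⊊ [n], the set of arcs of C entering I and the set of arcs of C leaving I are both nonempty: ind(C_I) ≠ ∅ and outd(C_I) ≠ ∅. (Lemma 3.6.) -/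
open Finset

/-- The possible tree sign vector entries: `+`, `-`, or `?`. -/
inductive TreeSign : Type
  | pos | neg | unk
  deriving DecidableEq

/-- The tree sign vector entry `σ_I(T)` for the directed graph with arc set `E`:
`+` if no arc enters `I`, `-` if no arc leaves `I`, and `?` otherwise. -/
def treeSign (n : ℕ) (E : Finset (Fin n × Fin n)) (I : Finset (Fin n)) :
    TreeSign :=
  if ∀ a ∈ E, a.2 ∈ I → a.1 ∈ I then TreeSign.pos
  else if ∀ a ∈ E, a.1 ∈ I → a.2 ∈ I then TreeSign.neg
  else TreeSign.unk

/-- Two alternating trees on `[n]` (given by arc sets `E`, `E'`) are sign compatible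
if there is no nonempty `I ⊆ [n-1]` on which their tree sign vectors take the two
opposite definite values `+` and `-`. -/
def SignCompatible (n : ℕ) (E E' : Finset (Fin n × Fin n)) : Prop :=
  ¬ ∃ I : Finset (Fin n), I.Nonempty ∧ (∀ i ∈ I, (i : ℕ) + 1 < n) ∧
    ((treeSign n E I = TreeSign.pos ∧ treeSign n E' I = TreeSign.neg) ∨
     (treeSign n E I = TreeSign.neg ∧ treeSign n E' I = TreeSign.pos))

/-!
An arc of `C(T,T')` entering `I` is either an arc of `T` entering `I` or the reversal of an arc
of `T'` leaving `I`. If there were none, then `σ_I(T) = +` and `σ_I(T') = -`; connectedness of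
the trees rules out the degenerate case where no arc crosses `I` at all, so these signs really
are the definite ones. Sign vectors are only indexed by subsets of `[n-1]`, so when `n ∈ I` one
passes to the complement, which swaps the two signs. Arcs leaving `I` are arcs entering `Iᶜ`.
-/

lemma Finset.compl_nonempty_of_ne_univ {α : Type*} [Fintype α] [DecidableEq α] {s : Finset α}
    (h : s ≠ univ) : sᶜ.Nonempty := by
  rwa [← compl_ne_univ_iff_nonempty, compl_compl]

variable {n : ℕ} {E E' : Finset (Fin n × Fin n)} {I : Finset (Fin n)}

lemma exists_arc_crossing_of_connected (hconn : (underlying n E).Connected) (hne : I.Nonempty)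
    (hproper : I ≠ univ) : ∃ a ∈ E, (a.1 ∈ I ∧ a.2 ∉ I) ∨ (a.1 ∉ I ∧ a.2 ∈ I) := by
  obtain ⟨i, hi⟩ := hne
  obtain ⟨j, hj⟩ := compl_nonempty_of_ne_univ hproper
  obtain ⟨d, -, hd₁, hd₂⟩ :=
    (hconn.preconnected i j).some.exists_boundary_dart (I : Set (Fin n)) hi (mem_compl.1 hj)
  rcases d.adj.2 with h | h
  · exact ⟨_, h, .inl ⟨hd₁, hd₂⟩⟩
  · exact ⟨_, h, .inr ⟨hd₂, hd₁⟩⟩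

lemma treeSign_eq_pos (h : ∀ a ∈ E, a.2 ∈ I → a.1 ∈ I) : treeSign n E I = .pos :=
  if_pos h

lemma treeSign_eq_neg_of_connected (hconn : (underlying n E).Connected) (hne : I.Nonempty)
    (hproper : I ≠ univ) (h : ∀ a ∈ E, a.1 ∈ I → a.2 ∈ I) : treeSign n E I = .neg := by
  have hnot_pos : ¬ ∀ a ∈ E, a.2 ∈ I → a.1 ∈ I := by
    intro hpos
    obtain ⟨a, ha, ⟨h₁, h₂⟩ | ⟨h₁, h₂⟩⟩ := exists_arc_crossing_of_connected hconn hne hproper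
    · exact h₂ (h a ha h₁)
    · exact h₁ (hpos a ha h₂)
  rw [treeSign, if_neg hnot_pos, if_pos h]

lemma forall_mem_compl_val_add_one_lt (h : ¬ ∀ i ∈ I, (i : ℕ) + 1 < n) :
    ∀ j ∈ Iᶜ, (j : ℕ) + 1 < n := by
  push Not at h
  obtain ⟨i, hi, hi_last⟩ := h
  intro j hj
  have hji : (j : ℕ) ≠ i := Fin.val_ne_of_ne fun hji => mem_compl.1 hj (hji ▸ hi)
  omega

lemma SignCompatible.exists_mem_ctt_entering (hcompat : SignCompatible n E E')
    (hconn : (underlying n E).Connected) (hconn' : (underlying n E').Connected)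
    (hne : I.Nonempty) (hproper : I ≠ univ) : ∃ a ∈ ctt n E E', a.1 ∉ I ∧ a.2 ∈ I := by
  by_contra! h
  have hE : ∀ a ∈ E, a.2 ∈ I → a.1 ∈ I :=
    fun a ha => not_imp_not.1 (h a (mem_union_left _ ha))
  have hE' : ∀ a ∈ E', a.1 ∈ I → a.2 ∈ I :=
    fun a ha => not_imp_not.1 (h a.swap (mem_union_right _ (mem_image_of_mem _ ha)))
  by_cases hI : ∀ i ∈ I, (i : ℕ) + 1 < n
  · exact hcompat ⟨I, hne, hI,
      .inl ⟨treeSign_eq_pos hE, treeSign_eq_neg_of_connected hconn' hne hproper hE'⟩⟩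
  · have hEc : ∀ a ∈ E, a.1 ∈ Iᶜ → a.2 ∈ Iᶜ := by
      simpa only [mem_compl, not_imp_not] using hE
    have hE'c : ∀ a ∈ E', a.2 ∈ Iᶜ → a.1 ∈ Iᶜ := by
      simpa only [mem_compl, not_imp_not] using hE'
    have hne_c := compl_nonempty_of_ne_univ hproper
    have hproper_c : Iᶜ ≠ univ := (compl_ne_univ_iff_nonempty I).2 hne
    exact hcompat ⟨Iᶜ, hne_c, forall_mem_compl_val_add_one_lt hI,
      .inr ⟨treeSign_eq_neg_of_connected hconn hne_c hproper_c hEc, treeSign_eq_pos hE'c⟩⟩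

/-- Lemma 3.6. If `T, T'` are sign compatible alternating trees on
`[n]` and `C = C(T,T')`, then for every nonempty proper subset `I ⊊ [n]` the arcs of
`C` entering `I` and the arcs of `C` leaving `I` are both nonempty. -/
theorem ctt_in_out_nonempty (n : ℕ) (E E' : Finset (Fin n × Fin n))
    (hT : IsAltTree n E) (hT' : IsAltTree n E') (hcompat : SignCompatible n E E')
    (I : Finset (Fin n)) (hne : I.Nonempty) (hproper : I ≠ Finset.univ) :
    (∃ a ∈ ctt n E E', a.1 ∉ I ∧ a.2 ∈ I) ∧
    (∃ a ∈ ctt n E E', a.1 ∈ I ∧ a.2 ∉ I) := by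
  have hconn := hT.2.connected
  have hconn' := hT'.2.connected
  refine ⟨hcompat.exists_mem_ctt_entering hconn hconn' hne hproper, ?_⟩
  obtain ⟨a, ha, h₁, h₂⟩ := hcompat.exists_mem_ctt_entering hconn hconn' (I := Iᶜ)
    (compl_nonempty_of_ne_univ hproper) ((compl_ne_univ_iff_nonempty I).2 hne)
  exact ⟨a, ha, notMem_compl.1 h₁, mem_compl.1 h₂⟩
end

section
/- Every point of a resonance hyperplane lies on the boundary of some root cone: if x ∈ ℝ^n satisfies Σ_{i∈[n]} x_i = 0 and Σ_{i∈I} x_i = 0 for some nonempty proper subset I ⊊ [n], then there exists an acyclic alternating directed graph G on [n] with at most n − 2 arcs, having no arcs between I and [n]−I, such that x ∈ 𝒞(G). (Second half of the proof of Proposition 3.8.) -/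
open Finset

/-!
Greedy transport. Take a positive coordinate `x i` and a negative one `x j` in the same block
(`I` or its complement), write `x = y + t (e_i - e_j)` with `t = min (x i) (-x j)`, and recurse
on `y`. The coordinates of `y` have the signs of those of `x` or vanish, and one of `y i`, `y j`
is zero, so `(i, j)` is a pendant arc of the forest obtained for `y`, and every arc runs from a
positive to a negative coordinate of `x`, which makes the graph alternating. Each arc clears a
coordinate and the last arc of each block clears two, whence `#E + 2 ≤ n`.
-/

open SimpleGraph

variable {n : ℕ}

lemma sum_rootVec_eq_zero {P : Finset (Fin n)} {i j : Fin n} (h : i ∈ P ↔ j ∈ P) :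
    ∑ m ∈ P, rootVec n (i, j) m = 0 := by
  simp [rootVec, sum_sub_distrib, h]

lemma add_smul_rootVec_mem_rootCone_insert {E : Finset (Fin n × Fin n)} {a : Fin n × Fin n}
    {x : Fin n → ℝ} {t : ℝ} (hx : x ∈ rootCone n E) (ha : a ∉ E) (ht : 0 ≤ t) :
    x + t • rootVec n a ∈ rootCone n (insert a E) := by
  obtain ⟨f, hf, rfl⟩ := hx
  refine ⟨Function.update f a t, fun b => ?_, ?_⟩
  · rcases eq_or_ne b a with rfl | hb
    · simpa using ht
    · simpa [hb] using hf b
  · rw [sum_insert ha, Function.update_self, add_comm]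
    congr 1
    refine sum_congr rfl fun b hb => ?_
    rw [Function.update_of_ne (ne_of_mem_of_not_mem hb ha)]

lemma underlying_empty : underlying n ∅ = ⊥ := by
  ext
  simp [underlying]

lemma underlying_insert (E : Finset (Fin n × Fin n)) (a : Fin n × Fin n) :
    underlying n (insert a E) = underlying n E ⊔ edge a.1 a.2 := by
  ext u v
  simp only [underlying, sup_adj, edge_adj, mem_insert, Prod.ext_iff]
  grind

lemma isAcyclic_underlying_insert {E : Finset (Fin n × Fin n)} {a : Fin n × Fin n} {k : Fin n}
    (hE : (underlying n E).IsAcyclic) (ha : a.1 ≠ a.2) (hka : k = a.1 ∨ k = a.2)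
    (hk : ∀ b ∈ E, b.1 ≠ k ∧ b.2 ≠ k) : (underlying n (insert a E)).IsAcyclic := by
  rw [underlying_insert]
  refine hE.sup_edge_of_not_reachable ?_
  have hiso : (underlying n E).neighborSet k = ∅ := by
    ext w
    simp only [mem_neighborSet, underlying, Set.mem_empty_iff_false, iff_false]
    rintro ⟨-, h | h⟩
    exacts [(hk _ h).1 rfl, (hk _ h).2 rfl]
  rcases hka with rfl | rfl
  · exact not_reachable_of_neighborSet_left_eq_empty ha hiso
  · exact not_reachable_of_neighborSet_right_eq_empty ha hiso

lemma isAlternating_of_forall_pos_neg {E : Finset (Fin n × Fin n)} {x : Fin n → ℝ}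
    (h : ∀ a ∈ E, 0 < x a.1 ∧ x a.2 < 0) : IsAlternating n E := fun v => by
  by_cases hv : 0 < x v
  · exact .inl fun a ha hav => (h a ha).2.not_gt (hav ▸ hv)
  · exact .inr fun a ha hav => hv (hav ▸ (h a ha).1)

lemma exists_pos_neg_of_sum_eq_zero {ι : Type*} {P : Finset ι} {x : ι → ℝ}
    (h : ∑ i ∈ P, x i = 0) {k : ι} (hk : k ∈ P) (hxk : x k ≠ 0) :
    (∃ i ∈ P, 0 < x i) ∧ ∃ j ∈ P, x j < 0 := by
  constructor
  · by_contra! hP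
    exact hxk ((sum_eq_zero_iff_of_nonpos hP).mp h k hk)
  · by_contra! hP
    exact hxk ((sum_eq_zero_iff_of_nonneg hP).mp h k hk)

lemma exists_eq_add_smul_rootVec {x : Fin n → ℝ} {i j : Fin n} (hi : 0 < x i) (hj : x j < 0) :
    ∃ t : ℝ, 0 < t ∧ ∃ y : Fin n → ℝ, x = y + t • rootVec n (i, j) ∧
      (∃ k, (k = i ∨ k = j) ∧ y k = 0) ∧ ∀ m, (0 < y m → 0 < x m) ∧ (y m < 0 → x m < 0) := by
  have hij : i ≠ j := fun h => (h ▸ hi).not_gt hj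
  set t := min (x i) (-x j)
  set y := x - t • rootVec n (i, j)
  have hyi : y i = x i - t := by simp [y, rootVec, hij]
  have hyj : y j = x j + t := by simp [y, rootVec, hij.symm]
  have hym (m : Fin n) (hmi : m ≠ i) (hmj : m ≠ j) : y m = x m := by simp [y, rootVec, hmi, hmj]
  have hti : t ≤ x i := min_le_left _ _
  have htj : t ≤ -x j := min_le_right _ _
  refine ⟨t, lt_min hi (neg_pos.mpr hj), y, by simp [y], ?_, fun m => ?_⟩
  · rcases min_choice (x i) (-x j) with h | h
    · exact ⟨i, .inl rfl, by rw [hyi, show t = x i from h, sub_self]⟩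
    · exact ⟨j, .inr rfl, by rw [hyj, show t = -x j from h, add_neg_cancel]⟩
  · by_cases hmi : m = i
    · subst hmi
      rw [hyi]
      constructor <;> intro <;> linarith
    by_cases hmj : m = j
    · subst hmj
      rw [hyj]
      constructor <;> intro <;> linarith
    rw [hym m hmi hmj]
    exact ⟨id, id⟩

lemma exists_pos_neg_of_sum_fiber_eq_zero {α : Type*} [DecidableEq α] {p : Fin n → α} {x : Fin n → ℝ}
    (hx : ∀ c, ∑ i with p i = c, x i = 0) (hx0 : x ≠ 0) :
    ∃ i j, p i = p j ∧ 0 < x i ∧ x j < 0 := by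
  obtain ⟨l, hl⟩ := Function.ne_iff.mp hx0
  obtain ⟨⟨i, hiP, hi⟩, j, hjP, hj⟩ :=
    exists_pos_neg_of_sum_eq_zero (hx (p l)) (mem_filter.mpr ⟨mem_univ l, rfl⟩) hl
  exact ⟨i, j, (mem_filter.mp hiP).2.trans (mem_filter.mp hjP).2.symm, hi, hj⟩

lemma image_erase_eq_of_map_eq {α β : Type*} [DecidableEq α] [DecidableEq β] {f : α → β}
    {s : Finset α} {k l : α} (hk : k ∈ s) (hl : l ∈ s) (hlk : l ≠ k) (hf : f l = f k) :
    (s.erase k).image f = s.image f := by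
  rw [← insert_erase hk, image_insert, erase_insert_eq_erase, erase_idem,
    insert_eq_of_mem (mem_image.mpr ⟨l, mem_erase.mpr ⟨hlk, hl⟩, hf⟩)]

theorem exists_acyclic_rootCone_of_sum_fiber_eq_zero {α : Type*} [DecidableEq α]
    (p : Fin n → α) (s : Finset (Fin n)) (x : Fin n → ℝ) (hs : ∀ i, x i ≠ 0 → i ∈ s)
    (hx : ∀ c, ∑ i with p i = c, x i = 0) :
    ∃ E : Finset (Fin n × Fin n), (∀ a ∈ E, 0 < x a.1 ∧ x a.2 < 0 ∧ p a.1 = p a.2) ∧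
      (underlying n E).IsAcyclic ∧ #E + #(s.image p) ≤ #s ∧ x ∈ rootCone n E := by
  induction s using Finset.strongInduction generalizing x with
  | H s ih =>
    by_cases hx0 : x = 0
    · subst hx0
      exact ⟨∅, by simp, by simp [underlying_empty], by simpa using card_image_le,
        ⟨0, fun _ => le_rfl, by simp⟩⟩
    obtain ⟨i, j, hpij, hi, hj⟩ := exists_pos_neg_of_sum_fiber_eq_zero hx hx0
    have hij : i ≠ j := fun h => (h ▸ hi).not_gt hj
    have his : i ∈ s := hs i hi.ne'
    have hjs : j ∈ s := hs j hj.ne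
    obtain ⟨t, ht, y, hxy, ⟨k, hk, hyk⟩, hsign⟩ := exists_eq_add_smul_rootVec hi hj
    have hks : k ∈ s := by rcases hk with rfl | rfl <;> assumption
    have hys (m : Fin n) (hm : y m ≠ 0) : m ∈ s.erase k := by
      refine mem_erase.mpr ⟨fun h => hm (h ▸ hyk), hs m ?_⟩
      rcases hm.lt_or_gt with h | h
      exacts [((hsign m).2 h).ne, ((hsign m).1 h).ne']
    have hyfiber (c : α) : ∑ m with p m = c, y m = 0 := by
      have hfiber : i ∈ univ.filter (p · = c) ↔ j ∈ univ.filter (p · = c) := by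
        simp [hpij]
      simpa [hxy, sum_add_distrib, ← mul_sum, sum_rootVec_eq_zero hfiber] using hx c
    obtain ⟨E, hEsign, hEacyc, hEcard, hEcone⟩ := ih _ (erase_ssubset hks) y hys hyfiber
    have hkE (b : Fin n × Fin n) (hb : b ∈ E) : b.1 ≠ k ∧ b.2 ≠ k :=
      ⟨fun h => (h ▸ (hEsign b hb).1).ne' hyk, fun h => (h ▸ (hEsign b hb).2.1).ne hyk⟩
    have hijE : (i, j) ∉ E := fun h => by
      rcases hk with rfl | rfl
      exacts [(hkE _ h).1 rfl, (hkE _ h).2 rfl]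
    refine ⟨insert (i, j) E, ?_, isAcyclic_underlying_insert hEacyc hij hk hkE, ?_,
      hxy ▸ add_smul_rootVec_mem_rootCone_insert hEcone hijE ht.le⟩
    · simp only [mem_insert, forall_eq_or_imp]
      exact ⟨⟨hi, hj, hpij⟩, fun b hb =>
        ⟨(hsign _).1 (hEsign b hb).1, (hsign _).2 (hEsign b hb).2.1, (hEsign b hb).2.2⟩⟩
    · have himage : (s.erase k).image p = s.image p := by
        rcases hk with rfl | rfl
        exacts [image_erase_eq_of_map_eq his hjs hij.symm hpij.symm,
          image_erase_eq_of_map_eq hjs his hij hpij]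
      have := card_insert_le (i, j) E
      have := card_erase_add_one hks
      rw [himage] at hEcard
      omega

/-- second half of the proof of Proposition 3.8. If
`x ∈ ℝ^n` satisfies `Σ_{i ∈ [n]} x i = 0` and `Σ_{i ∈ I} x i = 0` for some nonempty
proper subset `I ⊊ [n]`, then there is an acyclic alternating directed graph `G` on
`[n]` with at most `n - 2` arcs, having no arcs between `I` and `[n] - I`, such that
`x ∈ 𝒞(G)`. -/
theorem resonance_point_on_cone_boundary (n : ℕ) (x : Fin n → ℝ)
    (hsum : ∑ i, x i = 0) (I : Finset (Fin n)) (hne : I.Nonempty)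
    (hproper : I ≠ Finset.univ) (hI : ∑ i ∈ I, x i = 0) :
    ∃ E : Finset (Fin n × Fin n), IsAlternating n E ∧
      (underlying n E).IsAcyclic ∧ E.card ≤ n - 2 ∧
      (∀ a ∈ E, (a.1 ∈ I ↔ a.2 ∈ I)) ∧ x ∈ rootCone n E := by
  have hfiber (c : Bool) : ∑ i with decide (i ∈ I) = c, x i = 0 := by
    cases c <;> simp [filter_not, sum_sdiff_eq_sub, hsum, hI]
  obtain ⟨E, hsign, hacyc, hcard, hcone⟩ :=
    exists_acyclic_rootCone_of_sum_fiber_eq_zero (fun i => decide (i ∈ I)) univ x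
      (fun i _ => mem_univ i) hfiber
  have hparts : 1 < #(univ.image fun i => decide (i ∈ I)) := by
    obtain ⟨i, hi⟩ := hne
    obtain ⟨j, hj⟩ : ∃ j, j ∉ I := by simpa [eq_univ_iff_forall] using hproper
    exact one_lt_card.mpr ⟨_, mem_image_of_mem _ (mem_univ i), _,
      mem_image_of_mem _ (mem_univ j), by simp [hi, hj]⟩
  refine ⟨E, isAlternating_of_forall_pos_neg fun a ha => ⟨(hsign a ha).1, (hsign a ha).2.1⟩,
    hacyc, ?_, fun a ha => by simpa using (hsign a ha).2.2, hcone⟩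
  rw [card_univ, Fintype.card_fin] at hcard
  omega
end

section
/- Let ω : ℝ^{n+1} → ℝ^{n+1} be the cyclic coordinate permutation ω(x_1,...,x_{n+1}) = (x_2,...,x_{n+1},x_1), and let 𝒞 = 𝒞(K_{n+1}^+) be the positive root cone, i.e., the cone of nonnegative combinations of {e_i − e_j : 1 ≤ i < j ≤ n+1}. Then the cones 𝒞, ω𝒞, ω²𝒞, ..., ω^n𝒞 have pairwise disjoint interiors (relative to V_∅) and their union is all of V_∅ = {x ∈ ℝ^{n+1} : Σ x_i = 0}. (Lemma 3.11.) -/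
open Finset

/-- The arc set of the complete graph `K_m^+` on `[m]` with all edges directed from
smaller to larger vertices. -/
def posArcs (m : ℕ) : Finset (Fin m × Fin m) :=
  Finset.univ.filter (fun a : Fin m × Fin m => a.1 < a.2)

/-- The positive root cone: nonnegative combinations of `e_i - e_j` for `i < j`. -/
def posCone (m : ℕ) : Set (Fin m → ℝ) := rootCone m (posArcs m)

/-- The cyclic coordinate permutation `ω^k` of `ℝ^{n+1}`: `(ω^k x)_i = x_{i+k}`
(indices mod `n+1`). -/
def cyc (n : ℕ) (k : Fin (n + 1)) (x : Fin (n + 1) → ℝ) : Fin (n + 1) → ℝ :=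
  fun i => x (i + k)

/-!
A zero-sum vector `z` is the cyclic difference `Q j - Q (j - 1)` of its prefix sums `Q`, and
`ω^k` acts on such differences by shifting `Q`. The difference of `Q` is a nonnegative combination
of the simple roots `e_t - e_{t+1}` as soon as `Q` is minimal at the last index, so rotating a
minimum of `Q` to that position puts `z` into some `ω^k 𝒞`.

On `ω^k 𝒞` the coordinate sum over an initial segment of the cyclic order starting at `-k` is
nonnegative, and it is strictly positive on the relative interior, because it is not constant on
the cone. For `k ≠ l` the cyclic intervals `[-k, -l)` and `[-l, -k)` are such segments for
`ω^k 𝒞` and `ω^l 𝒞` and partition the indices, so at a common relative interior point two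
positive sums would add up to the total sum `0`.
-/

section RootCone

variable {n : ℕ} {E : Finset (Fin n × Fin n)}

def rootPointedCone (n : ℕ) (E : Finset (Fin n × Fin n)) : PointedCone ℝ (Fin n → ℝ) where
  carrier := rootCone n E
  add_mem' := by
    rintro _ _ ⟨f, hf, rfl⟩ ⟨g, hg, rfl⟩
    exact ⟨f + g, fun a => add_nonneg (hf a) (hg a), by simp [add_smul, sum_add_distrib]⟩
  zero_mem' := ⟨0, fun _ => le_rfl, by simp⟩
  smul_mem' := by
    rintro ⟨c, hc⟩ _ ⟨f, hf, rfl⟩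
    exact ⟨c • f, fun a => mul_nonneg hc (hf a), by simp [Finset.smul_sum, smul_smul]⟩

theorem rootVec_mem_rootCone {a : Fin n × Fin n} (ha : a ∈ E) : rootVec n a ∈ rootCone n E :=
  ⟨Pi.single a 1, fun b => by by_cases h : b = a <;> simp [h], by
    rw [sum_eq_single a (fun b _ hb => by simp [hb]) (fun h => absurd ha h)]; simp⟩

theorem sum_rootVec (S : Finset (Fin n)) (a : Fin n × Fin n) :
    ∑ i ∈ S, rootVec n a i = (if a.1 ∈ S then 1 else 0) - (if a.2 ∈ S then 1 else 0) := by
  simp [rootVec, sum_sub_distrib, sum_ite_eq']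

theorem sum_sum_smul_rootVec {S : Finset (Fin n)} (f : Fin n × Fin n → ℝ) :
    ∑ i ∈ S, (∑ a ∈ E, f a • rootVec n a) i
      = ∑ a ∈ E, f a * ((if a.1 ∈ S then 1 else 0) - (if a.2 ∈ S then 1 else 0)) := by
  simp only [Finset.sum_apply, Pi.smul_apply, smul_eq_mul]
  rw [sum_comm]
  simp [← mul_sum, sum_rootVec]

theorem rootCone_sum_nonneg {S : Finset (Fin n)} (hS : ∀ a ∈ E, a.2 ∈ S → a.1 ∈ S)
    {x : Fin n → ℝ} (hx : x ∈ rootCone n E) : 0 ≤ ∑ i ∈ S, x i := by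
  obtain ⟨f, hf, rfl⟩ := hx
  rw [sum_sum_smul_rootVec]
  refine sum_nonneg fun a ha => mul_nonneg (hf a) ?_
  by_cases h2 : a.2 ∈ S
  · simp [h2, hS a ha h2]
  · simp only [h2, if_false, sub_zero]; positivity

theorem rootCone_sum_eq_zero {x : Fin n → ℝ} (hx : x ∈ rootCone n E) : ∑ i, x i = 0 := by
  obtain ⟨f, -, rfl⟩ := hx
  simpa using sum_sum_smul_rootVec (E := E) (S := univ) f

end RootCone

open Filter Topology in
theorem pos_of_mem_intrinsicInterior {V : Type*} [AddCommGroup V] [Module ℝ V]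
    [TopologicalSpace V] [IsTopologicalAddGroup V] [ContinuousSMul ℝ V] {s : Set V}
    (φ : V →ₗ[ℝ] ℝ) (hs : ∀ y ∈ s, 0 ≤ φ y) {u v : V} (hu : u ∈ s) (hv : v ∈ s)
    (huv : φ u < φ v) {x : V} (hx : x ∈ intrinsicInterior ℝ s) : 0 < φ x := by
  obtain ⟨y, hy, rfl⟩ := hx
  have hdir : u - v ∈ (affineSpan ℝ s).direction :=
    AffineSubspace.vsub_mem_direction (mem_affineSpan ℝ hu) (mem_affineSpan ℝ hv)
  let γ : ℝ → affineSpan ℝ s := fun t =>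
    ⟨t • (u - v) + y, AffineSubspace.vadd_mem_of_mem_direction
      ((affineSpan ℝ s).direction.smul_mem t hdir) y.2⟩
  have hγ : Continuous γ := by fun_prop
  have hγ0 : γ 0 = y := Subtype.ext (by simp [γ])
  have hnear : ∀ᶠ t in 𝓝[>] (0 : ℝ), γ t ∈ interior (Subtype.val ⁻¹' s) :=
    nhdsWithin_le_nhds <| hγ.continuousAt.preimage_mem_nhds <| hγ0 ▸ isOpen_interior.mem_nhds hy
  obtain ⟨t, hts, ht⟩ := (hnear.and self_mem_nhdsWithin).exists
  have hφt := hs _ (Set.mem_preimage.1 (interior_subset hts))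
  simp only [γ, map_add, map_smul, map_sub, smul_eq_mul] at hφt
  nlinarith

section Cyclic

variable {n : ℕ}

theorem sum_cyc (k : Fin (n + 1)) (x : Fin (n + 1) → ℝ) : ∑ i, cyc n k x i = ∑ i, x i :=
  Fintype.sum_equiv (Equiv.addRight k) _ _ fun _ => rfl

theorem sum_filter_cyc (p : Fin (n + 1) → Prop) [DecidablePred p] (k : Fin (n + 1))
    (x : Fin (n + 1) → ℝ) : ∑ i with p (i + k), cyc n k x i = ∑ i with p i, x i := by
  simp only [sum_filter]
  exact Fintype.sum_equiv (Equiv.addRight k) _ _ fun _ => rfl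

theorem sum_eq_zero_of_mem_cyc_image {k : Fin (n + 1)} {x : Fin (n + 1) → ℝ}
    (hx : x ∈ cyc n k '' posCone (n + 1)) : ∑ i, x i = 0 := by
  obtain ⟨y, hy, rfl⟩ := hx
  rw [sum_cyc, rootCone_sum_eq_zero hy]

def cyclicDiff (Q : Fin (n + 1) → ℝ) : Fin (n + 1) → ℝ := fun j => Q j - Q (j - 1)

theorem cyclicDiff_sub_const (Q : Fin (n + 1) → ℝ) (c : ℝ) :
    cyclicDiff (fun j => Q j - c) = cyclicDiff Q := by
  ext j; simp [cyclicDiff]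

theorem cyc_cyclicDiff (k : Fin (n + 1)) (Q : Fin (n + 1) → ℝ) :
    cyc n k (cyclicDiff Q) = cyclicDiff (fun j => Q (j + k)) := by
  ext i; simp [cyc, cyclicDiff, sub_add_eq_add_sub]

theorem cyclicDiff_eq_sum_rootVec (Q : Fin (n + 1) → ℝ) :
    cyclicDiff Q = ∑ t, Q t • rootVec (n + 1) (t, t + 1) := by
  ext i
  have hpred : ∀ t : Fin (n + 1), i = t + 1 ↔ t = i - 1 := fun t => by
    rw [eq_sub_iff_add_eq, eq_comm]
  simp [cyclicDiff, rootVec, mul_sub, sum_sub_distrib, hpred]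

theorem cyclicDiff_mem_posCone {Q : Fin (n + 1) → ℝ} (hQ : ∀ j, Q (Fin.last n) ≤ Q j) :
    cyclicDiff Q ∈ posCone (n + 1) := by
  rw [← cyclicDiff_sub_const Q (Q (Fin.last n)), cyclicDiff_eq_sum_rootVec]
  refine (rootPointedCone _ _).sum_mem fun t _ => ?_
  rcases eq_or_ne t (Fin.last n) with rfl | ht
  · simp [(rootPointedCone _ _).zero_mem]
  · refine (rootPointedCone _ _).smul_mem (sub_nonneg.2 (hQ t)) (rootVec_mem_rootCone ?_)
    simpa [posArcs, Fin.lt_add_one_iff] using Fin.lt_last_iff_ne_last.2 ht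

theorem cyclicDiff_prefixSum {z : Fin (n + 1) → ℝ} (hz : ∑ i, z i = 0) :
    cyclicDiff (fun j => ∑ i ∈ Finset.Iic j, z i) = z := by
  ext j
  rcases eq_or_ne j 0 with rfl | hj
  · have hlast : (0 : Fin (n + 1)) - 1 = Fin.last n := Fin.ext (by simp [Fin.coe_neg_one])
    have hIic0 : Finset.Iic (0 : Fin (n + 1)) = {0} := by ext i; simp
    have hIic_last : Finset.Iic (Fin.last n) = univ := by ext i; simp [Fin.le_last]
    simp [cyclicDiff, hlast, hIic0, hIic_last, hz]
  · have hval := Fin.val_sub_one_of_ne_zero hj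
    have hj' : (j : ℕ) ≠ 0 := Fin.val_ne_zero_iff.2 hj
    have hIic : Finset.Iic j = insert j (Finset.Iic (j - 1)) := by
      ext i
      simp only [Finset.mem_Iic, Finset.mem_insert, Fin.le_iff_val_le_val, Fin.ext_iff, hval]
      omega
    have hj_notMem : j ∉ Finset.Iic (j - 1) := by
      simp only [Finset.mem_Iic, Fin.le_iff_val_le_val, hval]; omega
    rw [cyclicDiff, hIic, sum_insert hj_notMem]
    ring

theorem iUnion_cyc_image_posCone :
    ⋃ k, cyc n k '' posCone (n + 1) = {x | ∑ i, x i = 0} := by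
  refine Set.Subset.antisymm (Set.iUnion_subset fun k _ => sum_eq_zero_of_mem_cyc_image) ?_
  intro z hz
  rw [← cyclicDiff_prefixSum hz]
  set Q := fun j => ∑ i ∈ Finset.Iic j, z i
  obtain ⟨m, hm⟩ := Finite.exists_min Q
  refine Set.mem_iUnion.2
    ⟨Fin.last n - m, cyclicDiff fun j => Q (j + (m - Fin.last n)), ?_, ?_⟩
  · exact cyclicDiff_mem_posCone fun j => by simpa using hm _
  · rw [cyc_cyclicDiff]
    congr 1; funext j; congr 1; abel

end Cyclic

section Interiors

variable {n : ℕ}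

theorem posCone_sum_filter_val_lt_nonneg {m : ℕ} {y : Fin m → ℝ} (hy : y ∈ posCone m)
    (c : ℕ) : 0 ≤ ∑ i : Fin m with i.val < c, y i :=
  rootCone_sum_nonneg (fun a ha h2 => by
    simp only [posArcs, mem_filter, mem_univ, true_and] at ha h2 ⊢
    exact lt_trans ha h2) hy

theorem sum_filter_nonneg_of_mem_cyc_image {k : Fin (n + 1)} {x : Fin (n + 1) → ℝ}
    (hx : x ∈ cyc n k '' posCone (n + 1)) (c : ℕ) :
    0 ≤ ∑ i with ((i + k : Fin (n + 1)) : ℕ) < c, x i := by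
  obtain ⟨y, hy, rfl⟩ := hx
  rw [sum_filter_cyc (fun i => (i : ℕ) < c)]
  exact posCone_sum_filter_val_lt_nonneg hy c

theorem sum_filter_pos_of_mem_intrinsicInterior {k : Fin (n + 1)} {c : ℕ} (hc0 : 0 < c)
    (hcn : c ≤ n) {x : Fin (n + 1) → ℝ}
    (hx : x ∈ intrinsicInterior ℝ (cyc n k '' posCone (n + 1))) :
    0 < ∑ i with ((i + k : Fin (n + 1)) : ℕ) < c, x i := by
  let φ : (Fin (n + 1) → ℝ) →ₗ[ℝ] ℝ :=
    ∑ i with ((i + k : Fin (n + 1)) : ℕ) < c, LinearMap.proj i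
  have hφ : ∀ y, φ y = ∑ i with ((i + k : Fin (n + 1)) : ℕ) < c, y i := by simp [φ]
  have hlast : (0 : Fin (n + 1)) < Fin.last n := by rw [Fin.lt_def]; simp; omega
  have hroot : rootVec (n + 1) (0, Fin.last n) ∈ posCone (n + 1) :=
    rootVec_mem_rootCone (by simpa [posArcs] using hlast)
  have hφroot : φ (cyc n k (rootVec (n + 1) (0, Fin.last n))) = 1 := by
    rw [hφ, sum_filter_cyc (fun i => (i : ℕ) < c), sum_rootVec]
    simp [hc0, hcn.not_gt]
  have hφ0 : φ (cyc n k 0) = 0 := map_zero φ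
  simpa [hφ] using pos_of_mem_intrinsicInterior φ
    (fun y hy => hφ y ▸ sum_filter_nonneg_of_mem_cyc_image hy c)
    ⟨0, (rootPointedCone _ _).zero_mem, rfl⟩ ⟨_, hroot, rfl⟩
    (by rw [hφ0, hφroot]; exact one_pos) hx

/-- `{a | ↑(a + l) < ↑(l - k)}` is the cyclic interval `[-l, -k)` of `Fin (n + 1)`, and
`{a | ↑(a + k) < ↑(k - l)}` is `[-k, -l)`. -/
theorem val_add_lt_val_sub_iff_not {k l : Fin (n + 1)} (hkl : k ≠ l) (a : Fin (n + 1)) :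
    ((a + l : Fin (n + 1)) : ℕ) < ((l - k : Fin (n + 1)) : ℕ) ↔
      ¬ ((a + k : Fin (n + 1)) : ℕ) < ((k - l : Fin (n + 1)) : ℕ) := by
  have := a.isLt
  obtain h | h := lt_or_gt_of_ne hkl <;>
  · rw [Fin.sub_val_of_le h.le, Fin.coe_sub_iff_lt.2 h]
    rw [Fin.lt_def] at h
    simp only [Fin.val_add_eq_ite]
    split_ifs <;> omega

theorem disjoint_intrinsicInterior_cyc_image {k l : Fin (n + 1)} (hkl : k ≠ l) :
    Disjoint (intrinsicInterior ℝ (cyc n k '' posCone (n + 1)))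
      (intrinsicInterior ℝ (cyc n l '' posCone (n + 1))) := by
  refine Set.disjoint_left.2 fun x hxk hxl => ?_
  have hk := sum_filter_pos_of_mem_intrinsicInterior
    (Fin.pos_iff_ne_zero.2 (sub_ne_zero.2 hkl)) (Fin.is_le _) hxk
  have hl := sum_filter_pos_of_mem_intrinsicInterior
    (Fin.pos_iff_ne_zero.2 (sub_ne_zero.2 hkl.symm)) (Fin.is_le _) hxl
  have hsum := sum_eq_zero_of_mem_cyc_image (intrinsicInterior_subset hxk)
  rw [← sum_filter_add_sum_filter_not univ
    (fun a => ((a + k : Fin (n + 1)) : ℕ) < ((k - l : Fin (n + 1)) : ℕ))] at hsum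
  simp only [← val_add_lt_val_sub_iff_not hkl] at hsum
  linarith

end Interiors

/-- Lemma 3.11. The cones `𝒞, ω𝒞, ..., ω^n𝒞`, images of the
positive root cone `𝒞 = 𝒞(K_{n+1}^+)` under powers of the cyclic coordinate
permutation, have pairwise disjoint interiors relative to `V_∅` (i.e. disjoint
intrinsic interiors), and their union is all of `V_∅ = {x : Σ x i = 0}`. -/
theorem cyclic_images_cover (n : ℕ) :
    (∀ k l : Fin (n + 1), k ≠ l →
      Disjoint (intrinsicInterior ℝ (cyc n k '' posCone (n + 1)))
        (intrinsicInterior ℝ (cyc n l '' posCone (n + 1)))) ∧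
    (⋃ k : Fin (n + 1), cyc n k '' posCone (n + 1))
      = {x : Fin (n + 1) → ℝ | ∑ i, x i = 0} :=
  ⟨fun _ _ => disjoint_intrinsicInterior_cyc_image, iUnion_cyc_image_posCone⟩
end

section
/- The number of chambers of the rank-n resonance arrangement equals (n+1) times the number of chambers of the resonance arrangement contained in the positive root cone 𝒞(K_{n+1}^+): writing R_n^+ for the number of connected components of V_∅ \ ⋃_{∅≠S⊆[n]} U'_S that are contained in 𝒞(K_{n+1}^+), one has R_n = (n+1)·R_n^+. (Corollary 3.12.) -/
open Finset

/-!
For `x` in the complement, the prefix sums `Q j = x 0 + ⋯ + x (j - 1)`, `j = 0, …, n`, are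
pairwise distinct: their differences are sums over nonempty intervals avoiding the last
coordinate. A point of `V_∅` lies in the positive root cone iff all its prefix sums are
nonnegative, and the cyclic rotation `i ↦ x (i + k)` has prefix sums `Q (j + k) - Q k`; so exactly
one rotation of `x` lies in the cone, namely the one starting at the minimum of `Q`. Rotations
permute the chambers, and lying in the cone is constant on a chamber because the proper prefix
sums never vanish there. Hence every orbit of the cyclic group `Fin (n + 1)` on the chambers is
free and meets the positive chambers exactly once.
-/

section Orbits

variable {G α : Type*} [AddGroup G] [AddAction G α]

theorem Nat.card_eq_card_mul_card_of_existsUnique_vadd (P : α → Prop)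
    (h : ∀ c : α, ∃! g : G, P (g +ᵥ c)) : Nat.card α = Nat.card G * Nat.card {c // P c} := by
  have hbij : Function.Bijective fun q : G × {c // P c} => -q.1 +ᵥ (q.2 : α) := by
    constructor
    · rintro ⟨g, p, hp⟩ ⟨g', p', hp'⟩ heq
      dsimp only at heq
      have hg : g = g' :=
        (h (-g +ᵥ p)).unique (by rwa [vadd_neg_vadd]) (by rwa [heq, vadd_neg_vadd])
      subst hg
      simpa using heq
    · intro c
      obtain ⟨g, hg, -⟩ := h c
      exact ⟨(g, ⟨g +ᵥ c, hg⟩), neg_vadd_vadd g c⟩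
  rw [← Nat.card_prod]
  exact (Nat.card_congr (Equiv.ofBijective _ hbij)).symm

end Orbits

namespace ConnectedComponents

variable {G X : Type*} [AddMonoid G] [TopologicalSpace X] [AddAction G X] [ContinuousConstVAdd G X]

noncomputable instance : AddAction G (ConnectedComponents X) where
  vadd g := (continuous_const_vadd g).connectedComponentsMap
  zero_vadd c := by
    obtain ⟨x, rfl⟩ := surjective_coe c
    exact (Continuous.connectedComponentsMap_mk _ x).trans (congrArg mk (zero_vadd G x))
  add_vadd g h c := by
    obtain ⟨x, rfl⟩ := surjective_coe c
    exact (Continuous.connectedComponentsMap_mk _ x).trans (congrArg mk (add_vadd g h x))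

theorem vadd_mk (g : G) (x : X) : g +ᵥ mk x = mk (g +ᵥ x) :=
  Continuous.connectedComponentsMap_mk _ x

end ConnectedComponents

theorem pos_of_connectedComponents_mk_eq {X : Type*} [TopologicalSpace X] {g : X → ℝ}
    (hg : Continuous g) (hne : ∀ x, g x ≠ 0) {x y : X}
    (h : ConnectedComponents.mk x = ConnectedComponents.mk y) (hx : 0 < g x) : 0 < g y := by
  by_contra! hy
  have hyx : y ∈ connectedComponent x := ConnectedComponents.coe_eq_coe'.1 h.symm
  obtain ⟨w, -, hw⟩ := isPreconnected_connectedComponent.intermediate_value hyx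
    mem_connectedComponent hg.continuousOn ⟨hy, hx.le⟩
  exact hne w hw

namespace Resonance

section PrefixSum

variable {M : Type*} [AddCommGroup M] {n : ℕ}

def prefixSum (x : Fin (n + 1) → M) (j : Fin (n + 1)) : M := ∑ i ∈ Iio j, x i

def rotate (k : Fin (n + 1)) (x : Fin (n + 1) → M) : Fin (n + 1) → M := fun i => x (i + k)

@[simp]
theorem prefixSum_zero (x : Fin (n + 1) → M) : prefixSum x 0 = 0 := by
  rw [prefixSum, ← bot_eq_zero, Iio_bot, sum_empty]

theorem prefixSum_sub_prefixSum (x : Fin (n + 1) → M) {a b : Fin (n + 1)} (hab : a ≤ b) :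
    prefixSum x b - prefixSum x a = ∑ i ∈ Ico a b, x i := by
  rw [prefixSum, prefixSum, Iio_eq_Ico, Iio_eq_Ico, ← Ico_union_Ico_eq_Ico bot_le hab,
    sum_union (Ico_disjoint_Ico_consecutive ⊥ a b), add_sub_cancel_left]

theorem prefixSum_add_one {x : Fin (n + 1) → M} (h0 : ∑ i, x i = 0) (m : Fin (n + 1)) :
    prefixSum x (m + 1) = prefixSum x m + x m := by
  induction m using Fin.lastCases with
  | last =>
    rw [Fin.last_add_one, prefixSum_zero, prefixSum, add_comm, ← sum_insert notMem_Iio_self,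
      Iio_insert, ← Fin.top_eq_last, Iic_top, h0]
  | cast i =>
    rw [Fin.coeSucc_eq_succ, prefixSum, prefixSum, ← Fin.orderSucc_castSucc,
      Iio_succ_eq_Iic_of_not_isMax (not_isMax_of_lt (Fin.castSucc_lt_last i)), ← Iio_insert,
      sum_insert notMem_Iio_self, add_comm]

theorem sum_rotate (x : Fin (n + 1) → M) (k : Fin (n + 1)) : ∑ i, rotate k x i = ∑ i, x i :=
  Equiv.sum_comp (Equiv.addRight k) x

theorem prefixSum_rotate {x : Fin (n + 1) → M} (h0 : ∑ i, x i = 0) (k j : Fin (n + 1)) :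
    prefixSum (rotate k x) j = prefixSum x (j + k) - prefixSum x k := by
  induction j using Fin.induction with
  | zero => simp
  | succ j ih =>
    rw [← Fin.coeSucc_eq_succ, prefixSum_add_one ((sum_rotate x k).trans h0), ih,
      add_right_comm, prefixSum_add_one h0, rotate]
    abel

end PrefixSum

variable {n : ℕ}

theorem mem_resCompl_iff (x : Fin (n + 1) → ℝ) :
    x ∈ resCompl n ↔ (∑ i, x i = 0) ∧
      ∀ S : Finset (Fin (n + 1)), S.Nonempty → S ≠ univ → ∑ i ∈ S, x i ≠ 0 := by
  refine ⟨fun ⟨h0, h⟩ => ⟨h0, fun S hS hSu => ?_⟩,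
    fun ⟨h0, h⟩ => ⟨h0, fun S hS hl => h S hS fun hu => hl (hu ▸ mem_univ _)⟩⟩
  by_cases hl : Fin.last n ∈ S
  · -- the sum over `S` is minus the sum over its complement, which avoids the last coordinate
    have hsum : ∑ i ∈ S, x i + ∑ i ∈ Sᶜ, x i = 0 := by rw [sum_add_sum_compl, h0]
    have hc := h Sᶜ (by simpa [nonempty_iff_ne_empty] using hSu) (by simpa using hl)
    contrapose! hc
    rwa [hc, zero_add] at hsum
  · exact h S hS hl

theorem comp_perm_mem_resCompl {x : Fin (n + 1) → ℝ} (hx : x ∈ resCompl n)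
    (e : Equiv.Perm (Fin (n + 1))) : x ∘ e ∈ resCompl n := by
  rw [mem_resCompl_iff] at hx ⊢
  refine ⟨(Equiv.sum_comp e x).trans hx.1, fun S hS hSu => ?_⟩
  have hmap : ∑ i ∈ S, (x ∘ e) i = ∑ i ∈ S.map e.toEmbedding, x i := by
    simp
  rw [hmap]
  refine hx.2 _ hS.map fun hu => hSu ?_
  rwa [← map_univ_equiv e, map_inj] at hu

theorem rotate_mem_resCompl {x : Fin (n + 1) → ℝ} (hx : x ∈ resCompl n) (k : Fin (n + 1)) :
    rotate k x ∈ resCompl n :=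
  comp_perm_mem_resCompl hx (Equiv.addRight k)

theorem prefixSum_ne_zero {x : Fin (n + 1) → ℝ} (hx : x ∈ resCompl n) {j : Fin (n + 1)}
    (hj : j ≠ 0) : prefixSum x j ≠ 0 :=
  hx.2 (Iio j) ⟨0, mem_Iio.2 (Fin.pos_of_ne_zero hj)⟩ fun h => (mem_Iio.1 h).not_ge (Fin.le_last j)

theorem prefixSum_injective {x : Fin (n + 1) → ℝ} (hx : x ∈ resCompl n) :
    Function.Injective (prefixSum x) := by
  have key : ∀ a b : Fin (n + 1), a < b → prefixSum x a ≠ prefixSum x b := fun a b hab heq =>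
    hx.2 (Ico a b) (nonempty_Ico.2 hab) (fun h => (mem_Ico.1 h).2.not_ge (Fin.le_last b))
      (by rw [← prefixSum_sub_prefixSum x hab.le, heq, sub_self])
  intro a b heq
  by_contra hne
  rcases lt_or_gt_of_ne hne with h | h
  · exact key a b h heq
  · exact key b a h heq.symm

section RootCone

variable {m : ℕ}

theorem sum_rootVec (s : Finset (Fin m)) (a : Fin m × Fin m) :
    ∑ i ∈ s, rootVec m a i = (if a.1 ∈ s then 1 else 0) - (if a.2 ∈ s then 1 else 0) := by
  simp [rootVec, sum_sub_distrib, sum_ite_eq']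

theorem sum_sum_smul_rootVec (E : Finset (Fin m × Fin m)) (f : Fin m × Fin m → ℝ)
    (s : Finset (Fin m)) :
    ∑ i ∈ s, (∑ a ∈ E, f a • rootVec m a) i = ∑ a ∈ E, f a * ∑ i ∈ s, rootVec m a i := by
  simp only [Finset.sum_apply, Pi.smul_apply, smul_eq_mul, mul_sum]
  exact sum_comm

end RootCone

theorem eq_sum_prefixSum_smul_rootVec {x : Fin (n + 1) → ℝ} (h0 : ∑ i, x i = 0) :
    x = ∑ i, prefixSum x (i + 1) • rootVec (n + 1) (i, i + 1) := by
  have hshift : ∀ k, ∑ i, prefixSum x (i + 1) * (if k = i + 1 then 1 else 0) = prefixSum x k :=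
    fun k => by
      rw [Fintype.sum_equiv (Equiv.addRight 1)
        (fun i => prefixSum x (i + 1) * if k = i + 1 then 1 else 0)
        (fun i => prefixSum x i * if k = i then 1 else 0) fun _ => rfl]
      simp
  funext k
  rw [Finset.sum_apply]
  simp only [Pi.smul_apply, rootVec, smul_eq_mul, mul_sub, sum_sub_distrib, hshift]
  simp [prefixSum_add_one h0]

theorem mem_posCone_iff (x : Fin (n + 1) → ℝ) :
    x ∈ posCone (n + 1) ↔ (∑ i, x i = 0) ∧ ∀ j, 0 ≤ prefixSum x j := by
  constructor
  · rintro ⟨f, hf, rfl⟩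
    refine ⟨?_, fun j => ?_⟩
    · rw [sum_sum_smul_rootVec]
      exact sum_eq_zero fun a _ => by simp [sum_rootVec]
    · rw [prefixSum, sum_sum_smul_rootVec]
      refine sum_nonneg fun a ha => mul_nonneg (hf a) ?_
      have hlt : a.1 < a.2 := (mem_filter.1 ha).2
      by_cases h2 : a.2 < j
      · simp [sum_rootVec, h2, hlt.trans h2]
      · simp only [sum_rootVec, mem_Iio, h2, if_false, sub_zero]
        split_ifs <;> norm_num
  · rintro ⟨h0, hpre⟩
    set f : Fin (n + 1) × Fin (n + 1) → ℝ :=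
      fun a => if a.2 = a.1 + 1 then prefixSum x a.2 else 0
    refine ⟨f, fun a => by simp only [f]; split_ifs <;> simp [hpre], ?_⟩
    have hsub :
        ∑ a ∈ posArcs (n + 1), f a • rootVec (n + 1) a = ∑ a, f a • rootVec (n + 1) a := by
      refine sum_subset (subset_univ _) fun a _ ha => ?_
      -- the only cyclic arc missing from `posArcs` is `(last, 0)`, which carries no flow
      have hf : f a = 0 := by
        simp only [f]
        split_ifs with h
        · have hlast : a.1 = Fin.last n := by
            by_contra hne
            exact ha (mem_filter.2
              ⟨mem_univ _, h ▸ Fin.lt_add_one_iff.2 (Fin.lt_last_iff_ne_last.2 hne)⟩)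
          rw [h, hlast, Fin.last_add_one, prefixSum_zero]
        · rfl
      rw [hf, zero_smul]
    have hpath : ∑ a, f a • rootVec (n + 1) a =
        ∑ i, prefixSum x (i + 1) • rootVec (n + 1) (i, i + 1) := by
      rw [Fintype.sum_prod_type]
      simp [f, ite_smul]
    rw [hsub, hpath]
    exact eq_sum_prefixSum_smul_rootVec h0

theorem mem_posCone_iff_of_mem_resCompl {x : Fin (n + 1) → ℝ} (hx : x ∈ resCompl n) :
    x ∈ posCone (n + 1) ↔ ∀ j, j ≠ 0 → 0 < prefixSum x j := by
  rw [mem_posCone_iff]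
  refine ⟨fun ⟨_, h⟩ j hj => (h j).lt_of_ne' (prefixSum_ne_zero hx hj),
    fun h => ⟨hx.1, fun j => ?_⟩⟩
  rcases eq_or_ne j 0 with rfl | hj
  · rw [prefixSum_zero]
  · exact (h j hj).le

theorem rotate_mem_posCone_iff {x : Fin (n + 1) → ℝ} (hx : x ∈ resCompl n) (k : Fin (n + 1)) :
    rotate k x ∈ posCone (n + 1) ↔ ∀ j, j ≠ k → prefixSum x k < prefixSum x j := by
  rw [mem_posCone_iff_of_mem_resCompl (rotate_mem_resCompl hx k)]
  simp only [prefixSum_rotate hx.1, sub_pos]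
  refine ⟨fun h j hj => ?_, fun h j hj => h (j + k) (by simpa using hj)⟩
  simpa using h (j - k) (sub_ne_zero.2 hj)

theorem existsUnique_rotate_mem_posCone {x : Fin (n + 1) → ℝ} (hx : x ∈ resCompl n) :
    ∃! k : Fin (n + 1), rotate k x ∈ posCone (n + 1) := by
  obtain ⟨k, -, hk⟩ := exists_min_image univ (prefixSum x) univ_nonempty
  have hmin : ∀ j, j ≠ k → prefixSum x k < prefixSum x j := fun j hj =>
    (hk j (mem_univ j)).lt_of_ne fun h => hj (prefixSum_injective hx h).symm
  refine ⟨k, (rotate_mem_posCone_iff hx k).2 hmin, fun k' hk' => ?_⟩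
  by_contra hne
  exact ((rotate_mem_posCone_iff hx k').1 hk' k (Ne.symm hne)).not_gt (hmin k' hne)

instance : AddAction (Fin (n + 1)) (resCompl n) where
  vadd k x := ⟨rotate k x, rotate_mem_resCompl x.2 k⟩
  zero_vadd x := Subtype.ext <| funext fun i => congrArg x.1 (add_zero i)
  add_vadd a b x := Subtype.ext <| funext fun i => congrArg x.1 (by abel)

instance : ContinuousConstVAdd (Fin (n + 1)) (resCompl n) where
  continuous_const_vadd k := by
    refine Continuous.subtype_mk ?_ _
    exact continuous_pi fun i => (continuous_apply (i + k)).comp continuous_subtype_val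

theorem mem_posCone_of_mk_eq {x y : resCompl n}
    (h : ConnectedComponents.mk x = ConnectedComponents.mk y) (hx : x.1 ∈ posCone (n + 1)) :
    y.1 ∈ posCone (n + 1) := by
  rw [mem_posCone_iff_of_mem_resCompl x.2] at hx
  rw [mem_posCone_iff_of_mem_resCompl y.2]
  intro j hj
  exact pos_of_connectedComponents_mk_eq (g := fun z : resCompl n => prefixSum z.1 j)
    (continuous_finsetSum _ fun i _ => (continuous_apply i).comp continuous_subtype_val)
    (fun z => prefixSum_ne_zero z.2 hj) h (hx j hj)

end Resonance

open Resonance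

/-- Corollary 3.12. The number of chambers of the rank-`n`
resonance arrangement equals `(n+1)` times the number of its chambers that are
contained in the positive root cone `𝒞(K_{n+1}^+)`. -/
theorem resonance_chambers_cyclic_count (n : ℕ) :
    Nat.card (ConnectedComponents ↥(resCompl n)) =
      (n + 1) * Nat.card {c : ConnectedComponents ↥(resCompl n) //
        ∀ x : ↥(resCompl n), ConnectedComponents.mk x = c →
          (x : Fin (n + 1) → ℝ) ∈ posCone (n + 1)} := by
  refine (Nat.card_eq_card_mul_card_of_existsUnique_vadd (G := Fin (n + 1)) _ fun c => ?_).trans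
    (by rw [Nat.card_fin])
  obtain ⟨x, rfl⟩ := ConnectedComponents.surjective_coe c
  have hchamber : ∀ k : Fin (n + 1), (∀ y : resCompl n,
      ConnectedComponents.mk y = k +ᵥ ConnectedComponents.mk x → y.1 ∈ posCone (n + 1)) ↔
      rotate k x.1 ∈ posCone (n + 1) := fun k => by
    rw [ConnectedComponents.vadd_mk]
    exact ⟨fun h => h _ rfl, fun h y hy => mem_posCone_of_mk_eq hy.symm h⟩
  simpa only [hchamber] using existsUnique_rotate_mem_posCone x.2
end

section
/- Let T be an alternating tree on [n] and suppose x is induced by a strictly positive integer flow f : E(T) → ℤ_{>0} on T, with Σ_{s∈S} x_s ≠ 0 for every nonempty S ⊊ [n] (x lies in the interior of a resonance chamber). Suppose I ⊊ [n] is a nonempty subset with Σ_{i∈I} x_i > 0, and let (k,l) be an arc of T entering I (so l ∈ I, k ∉ I). Then there exists an alternating tree T' on [n] whose set of arcs entering I is contained in that of T (ind(T'_I) ⊆ ind(T_I)), together with a strictly positive integer flow f' : E(T') → ℤ_{>0} inducing the same point x, such that either (k,l) ∉ E(T'), or f'(k,l) < f(k,l). -/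
open Finset

section helpers

lemma rf_root_swap (n : ℕ) (u v : Fin n) : rootVec n (v, u) = - rootVec n (u, v) := by
  funext t; simp [rootVec]

lemma rf_root_self (n : ℕ) (u : Fin n) : rootVec n (u, u) = 0 := by
  funext t; simp [rootVec]

lemma rf_root_split (n : ℕ) (a b k l : Fin n) :
    rootVec n (a, l) + rootVec n (k, b) = rootVec n (a, b) + rootVec n (k, l) := by
  funext t; simp [rootVec]; ring

lemma rf_sum_root (n : ℕ) (S : Finset (Fin n)) (a : Fin n × Fin n) :
    ∑ s ∈ S, rootVec n a s
      = (if a.1 ∈ S then (1:ℝ) else 0) - (if a.2 ∈ S then (1:ℝ) else 0) := by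
  simp [rootVec, Finset.sum_sub_distrib, Finset.sum_ite_eq', eq_comm]

lemma rf_cut (n : ℕ) (A : Finset (Fin n × Fin n)) (g : Fin n × Fin n → ℝ)
    (S : Finset (Fin n)) :
    ∑ s ∈ S, (∑ a ∈ A, g a • rootVec n a) s
      = ∑ a ∈ A, g a * ((if a.1 ∈ S then (1:ℝ) else 0) - (if a.2 ∈ S then (1:ℝ) else 0)) := by
  have : ∀ s ∈ S, (∑ a ∈ A, g a • rootVec n a) s = ∑ a ∈ A, g a * rootVec n a s := by
    intro s _; simp [Finset.sum_apply]
  rw [Finset.sum_congr rfl this, Finset.sum_comm]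
  refine Finset.sum_congr rfl fun a _ => ?_
  rw [← Finset.mul_sum, rf_sum_root]

end helpers
section cycle

variable {n : ℕ} {G : SimpleGraph (Fin n)}

lemma rf_telescope {u v : Fin n} (w : G.Walk u v) :
    (w.darts.map (fun d => rootVec n d.toProd)).sum = rootVec n (u, v) := by
  induction w with
  | nil => simp [rf_root_self]
  | cons h p ih =>
    rw [SimpleGraph.Walk.darts_cons, List.map_cons, List.sum_cons, ih]
    funext t; simp [rootVec]

/-- Signed count of occurrences of an arc among a list of darts. -/
def rfDcoeff (L : List G.Dart) (a : Fin n × Fin n) : ℤ :=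
  ((L.filter (fun d => d.toProd = a)).length : ℤ)
    - ((L.filter (fun d => d.toProd = (a.2, a.1))).length : ℤ)

lemma rfDcoeff_nil (a : Fin n × Fin n) : rfDcoeff ([] : List G.Dart) a = 0 := by
  simp [rfDcoeff]

lemma rfDcoeff_cons (d : G.Dart) (L : List G.Dart) (a : Fin n × Fin n) :
    rfDcoeff (d :: L) a = rfDcoeff L a
      + ((if d.toProd = a then 1 else 0) - (if d.toProd = (a.2, a.1) then 1 else 0)) := by
  have key : ∀ (p : G.Dart → Bool), ((d :: L).filter p).length
      = (L.filter p).length + (if p d = true then 1 else 0) := by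
    intro p; rw [List.filter_cons]; split_ifs with h <;> simp [h]
  unfold rfDcoeff
  rw [key, key]
  simp only [decide_eq_true_eq]
  push_cast [apply_ite (fun m : ℕ => (m : ℤ))]
  ring

lemma rfDcoeff_sum (A : Finset (Fin n × Fin n)) (L : List G.Dart)
    (hL : ∀ d ∈ L, (d.toProd ∈ A ↔ (d.snd, d.fst) ∉ A)) :
    ∑ a ∈ A, (rfDcoeff L a : ℝ) • rootVec n a
      = (L.map (fun d => rootVec n d.toProd)).sum := by
  induction L with
  | nil => simp [rfDcoeff_nil]
  | cons d L ih =>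
    have hd := hL d List.mem_cons_self
    have hrest : ∀ d' ∈ L, (d'.toProd ∈ A ↔ (d'.snd, d'.fst) ∉ A) :=
      fun d' hd' => hL d' (List.mem_cons_of_mem d hd')
    rw [List.map_cons, List.sum_cons, ← ih hrest]
    have flip : ∀ a : Fin n × Fin n, (d.toProd = (a.2, a.1)) ↔ ((d.snd, d.fst) = a) := by
      rintro ⟨a1, a2⟩; simp [Prod.ext_iff, and_comm]
    have expand : ∀ a ∈ A, (rfDcoeff (d :: L) a : ℝ) • rootVec n a
        = (rfDcoeff L a : ℝ) • rootVec n a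
          + ((if d.toProd = a then (1:ℝ) else 0) - (if (d.snd, d.fst) = a then (1:ℝ) else 0))
              • rootVec n a := by
      intro a _
      rw [rfDcoeff_cons]
      have cast1 : ((rfDcoeff L a + ((if d.toProd = a then 1 else 0)
          - (if d.toProd = (a.2, a.1) then 1 else 0)) : ℤ) : ℝ)
          = (rfDcoeff L a : ℝ) + ((if d.toProd = a then (1:ℝ) else 0)
          - (if d.toProd = (a.2, a.1) then (1:ℝ) else 0)) := by
        push_cast [apply_ite (fun z : ℤ => (z : ℝ))]
        ring
      rw [cast1, add_smul]
      simp only [flip]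
    rw [Finset.sum_congr rfl expand, Finset.sum_add_distrib]
    have e1 : ∑ a ∈ A, ((if d.toProd = a then (1:ℝ) else 0)
        - (if (d.snd, d.fst) = a then (1:ℝ) else 0)) • rootVec n a
        = (if d.toProd ∈ A then rootVec n d.toProd else 0)
          - (if (d.snd, d.fst) ∈ A then rootVec n (d.snd, d.fst) else 0) := by
      simp only [sub_smul, Finset.sum_sub_distrib, ite_smul, one_smul, zero_smul]
      rw [Finset.sum_ite_eq A d.toProd (fun a => rootVec n a),
        Finset.sum_ite_eq A (d.snd, d.fst) (fun a => rootVec n a)]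
    rw [e1]
    rcases (iff_iff_and_or_not_and_not.mp hd) with ⟨h1, h2⟩ | ⟨h1, h2⟩
    · rw [if_pos h1, if_neg h2]; abel
    · rw [if_neg h1, if_pos (not_not.mp h2)]
      have : rootVec n (d.snd, d.fst) = - rootVec n d.toProd := by
        rw [rf_root_swap]
      rw [this]; abel

end cycle
section count

variable {n : ℕ} {G : SimpleGraph (Fin n)}

lemma rfDcoeff_swap (L : List G.Dart) (a : Fin n × Fin n) :
    rfDcoeff L (a.2, a.1) = - rfDcoeff L a := by
  unfold rfDcoeff
  simp only [Prod.mk.eta]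
  ring

lemma rf_dcoeff_head {u : Fin n} (w : G.Walk u u) (hw : w.IsCycle) (d₀ : G.Dart)
    (hd₀ : d₀ ∈ w.darts) : rfDcoeff w.darts d₀.toProd = 1 := by
  have hnodupE : (w.darts.map SimpleGraph.Dart.edge).Nodup := hw.edges_nodup
  have hinj : ∀ d1 ∈ w.darts, ∀ d2 ∈ w.darts, d1.edge = d2.edge → d1 = d2 :=
    fun d1 h1 d2 h2 he => List.inj_on_of_nodup_map hnodupE h1 h2 he
  have hdnodup : w.darts.Nodup := List.Nodup.of_map _ hnodupE
  have h2 : w.darts.filter (fun d => d.toProd = ((d₀.toProd).2, (d₀.toProd).1)) = [] := by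
    rw [List.filter_eq_nil_iff]
    intro d hd hpd
    have hp : d.toProd = (d₀.snd, d₀.fst) := by simpa using hpd
    have he : d.edge = d₀.edge := by
      show s(d.fst, d.snd) = s(d₀.fst, d₀.snd)
      rw [hp]
      exact Sym2.eq_swap
    have hdd : d = d₀ := hinj d hd d₀ hd₀ he
    rw [hdd] at hp
    exact d₀.fst_ne_snd (congrArg Prod.fst hp)
  have h1 : (w.darts.filter (fun d => d.toProd = d₀.toProd)).length = 1 := by
    have hc : w.darts.filter (fun d => d.toProd = d₀.toProd)
        = w.darts.filter (fun d => d = d₀) := by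
      apply List.filter_congr
      intro d hd
      simp only [decide_eq_decide]
      constructor
      · intro h; exact SimpleGraph.Dart.ext _ _ h
      · intro h; rw [h]
    rw [hc, ← List.countP_eq_length_filter]
    exact List.count_eq_one_of_mem hdnodup hd₀
  unfold rfDcoeff
  rw [h1, h2]
  simp

end count
section final

lemma rf_final (n : ℕ) (hn : 0 < n) (x : Fin n → ℝ) (zx : Fin n → ℤ)
    (hzx : ∀ i, x i = (zx i : ℝ))
    (hgen : ∀ S : Finset (Fin n), S.Nonempty → S ≠ Finset.univ → ∑ s ∈ S, x s ≠ 0)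
    (A : Finset (Fin n × Fin n)) (harc : ∀ a ∈ A, a.1 ≠ a.2)
    (hnd : ∀ a ∈ A, (a.2, a.1) ∉ A)
    (hacyc : (underlying n A).IsAcyclic)
    (g : Fin n × Fin n → ℝ) (hg : ∀ a ∈ A, 0 < g a)
    (hx : x = ∑ a ∈ A, g a • rootVec n a) :
    (underlying n A).IsTree ∧ ∃ f' : Fin n × Fin n → ℤ,
      (∀ a ∈ A, 0 < f' a) ∧ x = ∑ a ∈ A, (f' a : ℝ) • rootVec n a := by
  classical
  have hne : Nonempty (Fin n) := ⟨⟨0, hn⟩⟩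
  have hconn : (underlying n A).Connected := by
    rw [SimpleGraph.connected_iff]
    refine ⟨?_, hne⟩
    by_contra hpre
    unfold SimpleGraph.Preconnected at hpre
    push_neg at hpre
    obtain ⟨v, w, hvw⟩ := hpre
    set S : Finset (Fin n) := Finset.univ.filter
      (fun s => (underlying n A).Reachable v s) with hS
    have hvS : v ∈ S := Finset.mem_filter.mpr ⟨Finset.mem_univ _, SimpleGraph.Reachable.refl v⟩
    have hwS : w ∉ S := by simp [hS, hvw]
    have hsum : ∑ s ∈ S, x s = 0 := by
      rw [hx, rf_cut]
      refine Finset.sum_eq_zero fun a ha => ?_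
      have hadj : (underlying n A).Adj a.1 a.2 :=
        And.intro (harc a ha) (Or.inl (by rwa [Prod.mk.eta]))
      have hiff : a.1 ∈ S ↔ a.2 ∈ S := by
        simp only [hS, Finset.mem_filter, Finset.mem_univ, true_and]
        exact ⟨fun h => h.trans hadj.reachable, fun h => h.trans hadj.symm.reachable⟩
      by_cases h1 : a.1 ∈ S
      · rw [if_pos h1, if_pos (hiff.mp h1)]; ring
      · rw [if_neg h1, if_neg (fun h2 => h1 (hiff.mpr h2))]; ring
    exact hgen S ⟨v, hvS⟩ (fun h => hwS (h ▸ Finset.mem_univ w)) hsum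
  refine ⟨⟨hconn, hacyc⟩, ?_⟩
  have hbridge : ∀ a ∈ A, ¬ (underlying n (A.erase a)).Reachable a.2 a.1 := by
    intro a ha hreach
    have hadj : (underlying n A).Adj a.1 a.2 :=
      And.intro (harc a ha) (Or.inl (by rwa [Prod.mk.eta]))
    have hb := (SimpleGraph.isAcyclic_iff_forall_edge_isBridge.mp hacyc)
      (((underlying n A).mem_edgeSet).mpr hadj)
    rw [SimpleGraph.isBridge_iff] at hb
    apply hb
    have hmono : underlying n (A.erase a)
        ≤ (underlying n A) \ SimpleGraph.fromEdgeSet {s(a.1, a.2)} := by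
      intro i j hij
      obtain ⟨hne', hmem⟩ : i ≠ j ∧ ((i, j) ∈ A.erase a ∨ (j, i) ∈ A.erase a) := hij
      refine (SimpleGraph.sdiff_adj _ _ _ _).mpr ⟨And.intro hne' (hmem.imp (fun h => (Finset.mem_erase.mp h).2)
        (fun h => (Finset.mem_erase.mp h).2)), ?_⟩
      intro hAdj
      rw [SimpleGraph.fromEdgeSet_adj] at hAdj
      obtain ⟨hsym, _⟩ := hAdj
      rw [Set.mem_singleton_iff, Sym2.eq_iff] at hsym
      rcases hsym with ⟨h1, h2⟩ | ⟨h1, h2⟩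
      · rcases hmem with hm | hm
        · exact (Finset.mem_erase.mp hm).1 (by rw [h1, h2, Prod.mk.eta])
        · apply hnd a ha
          have : (j, i) = (a.2, a.1) := by rw [h1, h2]
          rw [← this]
          exact (Finset.mem_erase.mp hm).2
      · rcases hmem with hm | hm
        · apply hnd a ha
          have : (i, j) = (a.2, a.1) := by rw [h1, h2]
          rw [← this]
          exact (Finset.mem_erase.mp hm).2
        · exact (Finset.mem_erase.mp hm).1 (by rw [h1, h2, Prod.mk.eta])
    exact SimpleGraph.Reachable.mono hmono hreach.symm
  set Sa : (Fin n × Fin n) → Finset (Fin n) := fun a => Finset.univ.filter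
    (fun s => (underlying n (A.erase a)).Reachable a.2 s) with hSa
  have hcutval : ∀ a ∈ A, ∑ s ∈ Sa a, x s = - g a := by
    intro a ha
    rw [hx, rf_cut, Finset.sum_eq_single a]
    · have h2' : a.2 ∈ Sa a := Finset.mem_filter.mpr ⟨Finset.mem_univ _, SimpleGraph.Reachable.refl a.2⟩
      have h1' : a.1 ∉ Sa a := by
        simp only [hSa, Finset.mem_filter, Finset.mem_univ, true_and]
        exact hbridge a ha
      rw [if_neg h1', if_pos h2']; ring
    · intro b hb hba
      have hbe : b ∈ A.erase a := Finset.mem_erase.mpr ⟨hba, hb⟩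
      have hadj : (underlying n (A.erase a)).Adj b.1 b.2 :=
        And.intro (harc b hb) (Or.inl (by rwa [Prod.mk.eta]))
      have hiff : b.1 ∈ Sa a ↔ b.2 ∈ Sa a := by
        simp only [hSa, Finset.mem_filter, Finset.mem_univ, true_and]
        exact ⟨fun h => h.trans hadj.reachable, fun h => h.trans hadj.symm.reachable⟩
      by_cases h1 : b.1 ∈ Sa a
      · rw [if_pos h1, if_pos (hiff.mp h1)]; ring
      · rw [if_neg h1, if_neg (fun h2 => h1 (hiff.mpr h2))]; ring
    · intro h; exact absurd ha h
  have hval : ∀ a ∈ A, ((-∑ s ∈ Sa a, zx s : ℤ) : ℝ) = g a := by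
    intro a ha
    push_cast
    have : ∑ s ∈ Sa a, (zx s : ℝ) = ∑ s ∈ Sa a, x s :=
      Finset.sum_congr rfl fun s _ => (hzx s).symm
    rw [this, hcutval a ha]; ring
  refine ⟨fun a => -∑ s ∈ Sa a, zx s, ?_, ?_⟩
  · intro a ha
    have := hval a ha
    have hga := hg a ha
    rw [← this] at hga
    exact_mod_cast hga
  · rw [hx]
    exact Finset.sum_congr rfl fun a ha => by rw [hval a ha]

end final
section main

lemma rf_main (n : ℕ) (hn : 0 < n) (x : Fin n → ℝ) (zx : Fin n → ℤ)
    (hzx : ∀ i, x i = (zx i : ℝ))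
    (hgen : ∀ S : Finset (Fin n), S.Nonempty → S ≠ Finset.univ → ∑ s ∈ S, x s ≠ 0) :
    ∀ N : ℕ, ∀ A : Finset (Fin n × Fin n), A.card = N →
      (∀ a ∈ A, a.1 ≠ a.2) →
      (∃ g : Fin n × Fin n → ℝ, (∀ a ∈ A, 0 ≤ g a) ∧ x = ∑ a ∈ A, g a • rootVec n a) →
      ∃ E' ⊆ A, (underlying n E').IsTree ∧ ∃ f' : Fin n × Fin n → ℤ,
        (∀ a ∈ E', 0 < f' a) ∧ x = ∑ a ∈ E', (f' a : ℝ) • rootVec n a := by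
  intro N
  induction N using Nat.strong_induction_on with
  | _ N ih =>
  rintro A hcard harc ⟨g, hg0, hgx⟩
  by_cases h1 : ∃ a ∈ A, g a = 0
  · obtain ⟨a, ha, hga⟩ := h1
    obtain ⟨E', hsub, rest⟩ := ih (A.erase a).card
      (by rw [← hcard]; exact Finset.card_erase_lt_of_mem ha)
      (A.erase a) rfl (fun b hb => harc b (Finset.mem_of_mem_erase hb))
      ⟨g, fun b hb => hg0 b (Finset.mem_of_mem_erase hb), by
        rw [hgx]
        exact (Finset.sum_erase _ (by rw [hga, zero_smul])).symm⟩
    exact ⟨E', hsub.trans (Finset.erase_subset a A), rest⟩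
  push_neg at h1
  have hgpos : ∀ a ∈ A, 0 < g a :=
    fun a ha => lt_of_le_of_ne (hg0 a ha) (Ne.symm (h1 a ha))
  by_cases h2 : ∃ a ∈ A, (a.2, a.1) ∈ A
  · have key : ∀ u v : Fin n, (u, v) ∈ A → (v, u) ∈ A → g (v, u) ≤ g (u, v) →
        ∃ E' ⊆ A, (underlying n E').IsTree ∧ ∃ f' : Fin n × Fin n → ℤ,
          (∀ a ∈ E', 0 < f' a) ∧ x = ∑ a ∈ E', (f' a : ℝ) • rootVec n a := by
      intro u v huv hvu hle
      have huv' : u ≠ v := harc _ huv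
      have hne_pair : (u, v) ≠ (v, u) := fun h => huv' (congrArg Prod.fst h)
      have hmem : (u, v) ∈ A.erase (v, u) := Finset.mem_erase.mpr ⟨hne_pair, huv⟩
      set g'' : Fin n × Fin n → ℝ :=
        fun b => if b = (u, v) then g (u, v) - g (v, u) else g b with hgdef
      have E1 : ∑ b ∈ A, g b • rootVec n b
          = ∑ b ∈ A.erase (v, u), g b • rootVec n b + g (v, u) • rootVec n (v, u) :=
        (Finset.sum_erase_add A _ hvu).symm
      have E2 : ∑ b ∈ A.erase (v, u), g b • rootVec n b
          = ∑ b ∈ (A.erase (v, u)).erase (u, v), g b • rootVec n b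
            + g (u, v) • rootVec n (u, v) :=
        (Finset.sum_erase_add _ _ hmem).symm
      have E3 : ∑ b ∈ A.erase (v, u), g'' b • rootVec n b
          = ∑ b ∈ (A.erase (v, u)).erase (u, v), g'' b • rootVec n b
            + g'' (u, v) • rootVec n (u, v) :=
        (Finset.sum_erase_add _ _ hmem).symm
      have E4 : ∑ b ∈ (A.erase (v, u)).erase (u, v), g'' b • rootVec n b
          = ∑ b ∈ (A.erase (v, u)).erase (u, v), g b • rootVec n b :=
        Finset.sum_congr rfl fun b hb => by
          rw [hgdef]
          simp only
          rw [if_neg (Finset.mem_erase.mp hb).1]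
      have hguv : g'' (u, v) = g (u, v) - g (v, u) := by rw [hgdef]; simp
      have hx' : x = ∑ b ∈ A.erase (v, u), g'' b • rootVec n b := by
        rw [E3, E4, hguv, hgx, E1, E2, rf_root_swap, sub_smul, smul_neg]
        module
      obtain ⟨E', hsub, rest⟩ := ih (A.erase (v, u)).card
        (by rw [← hcard]; exact Finset.card_erase_lt_of_mem hvu)
        (A.erase (v, u)) rfl (fun b hb => harc b (Finset.mem_of_mem_erase hb))
        ⟨g'', fun b hb => by
          rw [hgdef]; simp only
          split_ifs with hbuv
          · linarith
          · exact hg0 b (Finset.mem_of_mem_erase hb), hx'⟩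
      exact ⟨E', hsub.trans (Finset.erase_subset _ _), rest⟩
    obtain ⟨a, ha, ha'⟩ := h2
    rcases le_total (g (a.2, a.1)) (g (a.1, a.2)) with hle | hle
    · exact key a.1 a.2 (by rwa [Prod.mk.eta]) ha' (by rwa [Prod.mk.eta])
    · exact key a.2 a.1 ha' (by rwa [Prod.mk.eta]) hle
  push_neg at h2
  by_cases h3 : (underlying n A).IsAcyclic
  · obtain ⟨htree, f', hf'pos, hf'x⟩ := rf_final n hn x zx hzx hgen A harc h2 h3 g hgpos hgx
    exact ⟨A, Finset.Subset.refl A, htree, f', hf'pos, hf'x⟩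
  · unfold SimpleGraph.IsAcyclic at h3
    push_neg at h3
    obtain ⟨v, w, hw⟩ := h3
    have hwne : w.darts ≠ [] := by
      intro hnil
      have hlen := SimpleGraph.Walk.length_darts w
      rw [hnil] at hlen
      have h3l := hw.three_le_length
      simp at hlen
      omega
    obtain ⟨d₀, L', hdL⟩ : ∃ d L', w.darts = d :: L' := by
      cases hdarts : w.darts with
      | nil => exact absurd hdarts hwne
      | cons d L => exact ⟨d, L, rfl⟩
    have hd₀ : d₀ ∈ w.darts := by rw [hdL]; exact List.mem_cons_self
    have hexact : ∀ d ∈ w.darts, (d.toProd ∈ A ↔ (d.snd, d.fst) ∉ A) := by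
      intro d _
      obtain ⟨hne', hmem⟩ : d.fst ≠ d.snd ∧ ((d.fst, d.snd) ∈ A ∨ (d.snd, d.fst) ∈ A) := d.adj
      constructor
      · intro hin hrev; exact (h2 _ hin) hrev
      · intro hnotrev
        rcases hmem with h | h
        · exact h
        · exact absurd h hnotrev
    have hczero : ∑ a ∈ A, (rfDcoeff w.darts a : ℝ) • rootVec n a = 0 := by
      rw [rfDcoeff_sum A w.darts hexact, rf_telescope, rf_root_self]
    have hsign : ∃ cD : Fin n × Fin n → ℤ,
        (∑ a ∈ A, (cD a : ℝ) • rootVec n a = 0) ∧ ∃ a₀ ∈ A, 0 < cD a₀ := by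
      by_cases hmem : d₀.toProd ∈ A
      · exact ⟨rfDcoeff w.darts, hczero, d₀.toProd, hmem,
          by rw [rf_dcoeff_head w hw d₀ hd₀]; norm_num⟩
      · have hrev : (d₀.snd, d₀.fst) ∈ A := by
          rcases (show d₀.fst ≠ d₀.snd ∧ ((d₀.fst, d₀.snd) ∈ A ∨ (d₀.snd, d₀.fst) ∈ A) from d₀.adj).2 with h | h
          · exact absurd h hmem
          · exact h
        refine ⟨fun a => -(rfDcoeff w.darts a), ?_, (d₀.snd, d₀.fst), hrev, ?_⟩
        · have hterm : ∀ a ∈ A, ((-(rfDcoeff w.darts a) : ℤ) : ℝ) • rootVec n a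
              = -((rfDcoeff w.darts a : ℝ) • rootVec n a) := by
            intro a _; push_cast; rw [neg_smul]
          rw [Finset.sum_congr rfl hterm, Finset.sum_neg_distrib, hczero, neg_zero]
        · have hswap : rfDcoeff w.darts (d₀.snd, d₀.fst) = -1 := by
            have heta : ((d₀.toProd).2, (d₀.toProd).1) = (d₀.snd, d₀.fst) := rfl
            rw [← heta, rfDcoeff_swap, rf_dcoeff_head w hw d₀ hd₀]
          simp only [hswap]
          norm_num
    obtain ⟨cD, hcD0, a₀, ha₀, ha₀pos⟩ := hsign
    have hPne : (A.filter (fun b => 0 < cD b)).Nonempty :=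
      ⟨a₀, Finset.mem_filter.mpr ⟨ha₀, ha₀pos⟩⟩
    obtain ⟨m, hmP, hmin⟩ :=
      Finset.exists_min_image (A.filter (fun b => 0 < cD b)) (fun b => g b / (cD b : ℝ)) hPne
    have hmA : m ∈ A := (Finset.mem_filter.mp hmP).1
    have hmc : (0:ℝ) < (cD m : ℝ) := by exact_mod_cast (Finset.mem_filter.mp hmP).2
    have ht0 : 0 ≤ g m / (cD m : ℝ) := div_nonneg (hg0 m hmA) hmc.le
    set t : ℝ := g m / (cD m : ℝ) with ht
    set g' : Fin n × Fin n → ℝ := fun b => g b - t * (cD b : ℝ) with hg'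
    have hg'0 : ∀ b ∈ A, 0 ≤ g' b := by
      intro b hb
      rw [hg']
      simp only
      by_cases hbc : 0 < cD b
      · have hbP : b ∈ A.filter (fun b => 0 < cD b) := Finset.mem_filter.mpr ⟨hb, hbc⟩
        have hmle := hmin b hbP
        have hcb : (0:ℝ) < (cD b : ℝ) := by exact_mod_cast hbc
        have := (le_div_iff₀ hcb).mp hmle
        linarith
      · have hcb : (cD b : ℝ) ≤ 0 := by exact_mod_cast not_lt.mp hbc
        nlinarith [mul_nonneg ht0 (neg_nonneg.mpr hcb), hg0 b hb]
    have hg'm : g' m = 0 := by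
      rw [hg']
      simp only
      rw [ht]
      field_simp
      simp
    have hx' : x = ∑ b ∈ A.erase m, g' b • rootVec n b := by
      have hsplit : ∑ b ∈ A, g' b • rootVec n b
          = ∑ b ∈ A, g b • rootVec n b - t • ∑ b ∈ A, (cD b : ℝ) • rootVec n b := by
        rw [Finset.smul_sum, ← Finset.sum_sub_distrib]
        refine Finset.sum_congr rfl fun b _ => ?_
        rw [hg']
        simp only
        rw [sub_smul, smul_smul]
      have hAx : ∑ b ∈ A, g' b • rootVec n b = x := by
        rw [hsplit, hcD0, smul_zero, sub_zero, ← hgx]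
      rw [← hAx]
      exact (Finset.sum_erase _ (by rw [hg'm, zero_smul])).symm
    obtain ⟨E', hsub, rest⟩ := ih (A.erase m).card
      (by rw [← hcard]; exact Finset.card_erase_lt_of_mem hmA)
      (A.erase m) rfl (fun b hb => harc b (Finset.mem_of_mem_erase hb))
      ⟨g', fun b hb => hg'0 b (Finset.mem_of_mem_erase hb), hx'⟩
    exact ⟨E', hsub.trans (Finset.erase_subset _ _), rest⟩

end main
section cone

lemma rf_distribute {α : Type*} [DecidableEq α] (L : Finset α) (q : α → ℤ) :
    ∀ p : ℤ, 0 ≤ p → p ≤ ∑ a ∈ L, q a → (∀ a ∈ L, 0 ≤ q a) →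
    ∃ γ : α → ℤ, (∀ a ∈ L, 0 ≤ γ a ∧ γ a ≤ q a) ∧ (∀ a ∉ L, γ a = 0) ∧
      ∑ a ∈ L, γ a = p := by
  induction L using Finset.induction with
  | empty =>
    intro p hp0 hple _
    simp only [Finset.sum_empty] at hple
    exact ⟨fun _ => 0, by simp, by simp, by simp; omega⟩
  | insert _ _ ha =>
    rename_i a L ih
    intro p hp0 hple hq
    have hqa : 0 ≤ q a := hq a (Finset.mem_insert_self a L)
    have hsum : ∑ b ∈ insert a L, q b = q a + ∑ b ∈ L, q b := Finset.sum_insert ha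
    have hqL : 0 ≤ ∑ b ∈ L, q b :=
      Finset.sum_nonneg fun b hb => hq b (Finset.mem_insert_of_mem hb)
    obtain ⟨γ', hb1, hb2, hb3⟩ := ih (p - min (q a) p) (by omega)
      (by rw [hsum] at hple; omega)
      (fun b hb => hq b (Finset.mem_insert_of_mem hb))
    refine ⟨fun b => if b = a then min (q a) p else γ' b, ?_, ?_, ?_⟩
    · intro b hb
      by_cases hba : b = a
      · subst hba; simp; omega
      · rcases Finset.mem_insert.mp hb with h | h
        · exact absurd h hba
        · simpa [hba] using hb1 b h
    · intro b hb
      have hba : b ≠ a := fun h => hb (h ▸ Finset.mem_insert_self a L)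
      have hbL : b ∉ L := fun h => hb (Finset.mem_insert_of_mem h)
      simp [hba, hb2 b hbL]
    · have hcong : ∑ b ∈ L, (if b = a then min (q a) p else γ' b) = ∑ b ∈ L, γ' b :=
        Finset.sum_congr rfl fun b hb => if_neg (fun h : b = a => ha (h ▸ hb))
      rw [Finset.sum_insert ha, if_pos rfl, hcong, hb3]
      omega

/-- `x` has a nonnegative representation on the arc set `A`. -/
def RfRep (n : ℕ) (A : Finset (Fin n × Fin n)) (x : Fin n → ℝ) : Prop :=
  ∃ g : Fin n × Fin n → ℝ, (∀ a ∈ A, 0 ≤ g a) ∧ x = ∑ a ∈ A, g a • rootVec n a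

lemma rfRep_mono {n : ℕ} {A B : Finset (Fin n × Fin n)} {x : Fin n → ℝ}
    (hAB : A ⊆ B) (h : RfRep n A x) : RfRep n B x := by
  classical
  obtain ⟨g, hg0, hgx⟩ := h
  refine ⟨fun a => if a ∈ A then g a else 0, ?_, ?_⟩
  · intro a _
    dsimp only
    split_ifs with h
    · exact hg0 a h
    · exact le_refl 0
  · rw [hgx, ← Finset.sum_subset hAB (fun b _ hbA => by
      dsimp only; rw [if_neg hbA, zero_smul])]
    exact Finset.sum_congr rfl fun b hb => by dsimp only; rw [if_pos hb]

lemma rfRep_add {n : ℕ} {A B : Finset (Fin n × Fin n)} {x y : Fin n → ℝ}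
    (hx : RfRep n A x) (hy : RfRep n B y) : RfRep n (A ∪ B) (x + y) := by
  obtain ⟨g1, hg10, hg1x⟩ := rfRep_mono (Finset.subset_union_left (s₂ := B)) hx
  obtain ⟨g2, hg20, hg2x⟩ := rfRep_mono (Finset.subset_union_right (s₁ := A)) hy
  refine ⟨fun a => g1 a + g2 a, fun a ha => add_nonneg (hg10 a ha) (hg20 a ha), ?_⟩
  rw [hg1x, hg2x, ← Finset.sum_add_distrib]
  exact Finset.sum_congr rfl fun a _ => (add_smul _ _ _).symm

lemma rfRep_zero {n : ℕ} : RfRep n ∅ 0 :=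
  ⟨fun _ => 0, fun _ h => absurd h (Finset.notMem_empty _), by simp⟩

lemma rfRep_biUnion {n : ℕ} {α : Type*} [DecidableEq α] (L : Finset α)
    (B : α → Finset (Fin n × Fin n)) (y : α → Fin n → ℝ)
    (h : ∀ e ∈ L, RfRep n (B e) (y e)) :
    RfRep n (L.biUnion B) (∑ e ∈ L, y e) := by
  classical
  induction L using Finset.induction with
  | empty => simpa using rfRep_zero
  | insert _ _ ha =>
    rename_i a L ih
    rw [Finset.biUnion_insert, Finset.sum_insert ha]
    exact rfRep_add (h a (Finset.mem_insert_self a L))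
      (ih fun e he => h e (Finset.mem_insert_of_mem he))

lemma rfRep_pair {n : ℕ} {a b : Fin n × Fin n} (hab : a ≠ b) {c : ℝ} (hc : 0 ≤ c) :
    RfRep n {a, b} (c • rootVec n a + c • rootVec n b) :=
  ⟨fun _ => c, fun _ _ => hc, by rw [Finset.sum_pair hab]⟩

end cone

/-- Lemma 3.17. Let `T` be an alternating tree on `[n]` (arc set
`E`) and let `x` be induced by a strictly positive integer flow `f` on `T`, with
`Σ_{s ∈ S} x s ≠ 0` for every nonempty proper `S ⊊ [n]`. Suppose `∅ ≠ I ⊊ [n]` with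
`Σ_{i ∈ I} x i > 0`, and let `(k,l) ∈ E` be an arc entering `I` (`l ∈ I`, `k ∉ I`).
Then there is an alternating tree `T'` on `[n]` whose arcs entering `I` are all arcs
of `T`, with a strictly positive integer flow `f'` inducing the same point `x`, such
that either `(k,l) ∉ E(T')` or `f'(k,l) < f(k,l)`. -/
theorem reduce_flow_on_entering_arc (n : ℕ) (E : Finset (Fin n × Fin n))
    (hT : IsAltTree n E) (f : Fin n × Fin n → ℤ) (hf : ∀ a ∈ E, 0 < f a)
    (x : Fin n → ℝ) (hx : x = ∑ a ∈ E, (f a : ℝ) • rootVec n a)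
    (hgen : ∀ S : Finset (Fin n), S.Nonempty → S ≠ Finset.univ → ∑ s ∈ S, x s ≠ 0)
    (I : Finset (Fin n)) (hne : I.Nonempty) (hproper : I ≠ Finset.univ)
    (hpos : 0 < ∑ i ∈ I, x i)
    (k l : Fin n) (hkl : (k, l) ∈ E) (hl : l ∈ I) (hk : k ∉ I) :
    ∃ E' : Finset (Fin n × Fin n), IsAltTree n E' ∧
      (∀ a ∈ E', a.2 ∈ I → a.1 ∉ I → a ∈ E) ∧
      ∃ f' : Fin n × Fin n → ℤ, (∀ a ∈ E', 0 < f' a) ∧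
        x = ∑ a ∈ E', (f' a : ℝ) • rootVec n a ∧
        ((k, l) ∉ E' ∨ f' (k, l) < f (k, l)) := by
  classical
  obtain ⟨v0, hv0⟩ := hne
  have hn : 0 < n := v0.pos
  -- integral coordinates
  set zx : Fin n → ℤ := fun i => ∑ a ∈ E, f a *
    ((if i = a.1 then 1 else 0) - (if i = a.2 then 1 else 0)) with hzxdef
  have hzx : ∀ i, x i = (zx i : ℝ) := by
    intro i
    rw [hx, Finset.sum_apply, hzxdef]
    push_cast [apply_ite (fun z : ℤ => (z : ℝ))]
    refine Finset.sum_congr rfl fun a _ => ?_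
    simp [rootVec]
  -- leaving and entering arc sets
  set Lv := E.filter (fun a => a.1 ∈ I ∧ a.2 ∉ I) with hLv
  set En := E.filter (fun a => a.1 ∉ I ∧ a.2 ∈ I) with hEn
  have hcutI : ∑ s ∈ I, x s
      = ((∑ a ∈ Lv, f a : ℤ) : ℝ) - ((∑ a ∈ En, f a : ℤ) : ℝ) := by
    rw [hx, rf_cut]
    have hterm : ∀ a ∈ E, (f a : ℝ) *
        ((if a.1 ∈ I then (1:ℝ) else 0) - (if a.2 ∈ I then (1:ℝ) else 0))
        = (if a.1 ∈ I ∧ a.2 ∉ I then (f a : ℝ) else 0)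
          - (if a.1 ∉ I ∧ a.2 ∈ I then (f a : ℝ) else 0) := by
      intro a _
      by_cases h1 : a.1 ∈ I <;> by_cases h2 : a.2 ∈ I <;> simp [h1, h2]
    rw [Finset.sum_congr rfl hterm, Finset.sum_sub_distrib,
      ← Finset.sum_filter, ← Finset.sum_filter]
    push_cast
    rw [hLv, hEn]
  have hklEn : (k, l) ∈ En := Finset.mem_filter.mpr ⟨hkl, hk, hl⟩
  have hins : f (k, l) ≤ ∑ a ∈ En, f a :=
    Finset.single_le_sum (fun a ha => (hf a (Finset.mem_filter.mp ha).1).le) hklEn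
  have hLvEn : (∑ a ∈ En, f a) < ∑ a ∈ Lv, f a := by
    have hp := hpos
    rw [hcutI] at hp
    have := sub_pos.mp hp
    exact_mod_cast this
  have hple : f (k, l) ≤ ∑ a ∈ Lv, f a := le_trans hins hLvEn.le
  obtain ⟨γ, hγb, hγ0, hγsum⟩ := rf_distribute Lv f (f (k, l)) (hf _ hkl).le hple
    (fun a ha => (hf a (Finset.mem_filter.mp ha).1).le)
  have hnoloop : ∀ a ∈ E, a.1 ≠ a.2 := by
    intro a ha h
    rcases hT.1 a.2 with hs | hs
    · exact hs a ha rfl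
    · exact hs a ha h
  set pairs : (Fin n × Fin n) → Finset (Fin n × Fin n) :=
    fun e => {(e.1, l), (k, e.2)} with hpairs
  set A : Finset (Fin n × Fin n) := (E.erase (k, l)) ∪ Lv.biUnion pairs with hA
  have hmemA : ∀ b ∈ A, b ∈ E.erase (k, l) ∨
      (∃ e ∈ Lv, b = (e.1, l)) ∨ (∃ e ∈ Lv, b = (k, e.2)) := by
    intro b hb
    rcases Finset.mem_union.mp hb with h | h
    · exact Or.inl h
    · obtain ⟨e, he, hbe⟩ := Finset.mem_biUnion.mp h
      rcases Finset.mem_insert.mp hbe with h' | h'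
      · exact Or.inr (Or.inl ⟨e, he, h'⟩)
      · exact Or.inr (Or.inr ⟨e, he, Finset.mem_singleton.mp h'⟩)
  have hLvsub : Lv ⊆ E.erase (k, l) := by
    intro e he
    obtain ⟨heE, he1, he2⟩ := Finset.mem_filter.mp he
    refine Finset.mem_erase.mpr ⟨?_, heE⟩
    intro h
    rw [h] at he1
    exact hk he1
  -- the representation of x on A
  have hrep : ∃ g : Fin n × Fin n → ℝ, (∀ a ∈ A, 0 ≤ g a) ∧
      x = ∑ a ∈ A, g a • rootVec n a := by
    have hx0 : RfRep n (E.erase (k, l))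
        (∑ a ∈ E.erase (k, l), ((f a - γ a : ℤ) : ℝ) • rootVec n a) := by
      refine ⟨fun a => ((f a - γ a : ℤ) : ℝ), ?_, rfl⟩
      intro a ha
      by_cases haLv : a ∈ Lv
      · have h2 := (hγb a haLv).2
        have h3 : (0:ℤ) ≤ f a - γ a := by omega
        dsimp only
        exact_mod_cast h3
      · have h0 := hγ0 a haLv
        have h3 : (0:ℤ) ≤ f a - γ a := by
          have := (hf a (Finset.mem_of_mem_erase ha)).le
          omega
        dsimp only
        exact_mod_cast h3
    have hy : RfRep n (Lv.biUnion pairs)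
        (∑ e ∈ Lv, ((γ e : ℝ) • rootVec n (e.1, l) + (γ e : ℝ) • rootVec n (k, e.2))) := by
      refine rfRep_biUnion Lv pairs
        (fun e => (γ e : ℝ) • rootVec n (e.1, l) + (γ e : ℝ) • rootVec n (k, e.2)) ?_
      intro e he
      obtain ⟨heE, he1, he2⟩ := Finset.mem_filter.mp he
      have hne' : (e.1, l) ≠ (k, e.2) := by
        intro h
        have := congrArg Prod.fst h
        simp only at this
        rw [this] at he1
        exact hk he1
      have hγe : (0:ℝ) ≤ (γ e : ℝ) := by exact_mod_cast (hγb e he).1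
      exact rfRep_pair hne' hγe
    have hsplit_e : ∀ e : Fin n × Fin n,
        (γ e : ℝ) • rootVec n (e.1, l) + (γ e : ℝ) • rootVec n (k, e.2)
        = (γ e : ℝ) • rootVec n e + (γ e : ℝ) • rootVec n (k, l) := by
      intro e
      rw [← smul_add, ← smul_add, rf_root_split n e.1 e.2 k l, Prod.mk.eta]
    have hxsum : x = (∑ a ∈ E.erase (k, l), ((f a - γ a : ℤ) : ℝ) • rootVec n a)
        + (∑ e ∈ Lv, ((γ e : ℝ) • rootVec n (e.1, l) + (γ e : ℝ) • rootVec n (k, e.2))) := by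
      have e1 : ∑ a ∈ E.erase (k, l), ((f a - γ a : ℤ) : ℝ) • rootVec n a
          = ∑ a ∈ E.erase (k, l), (f a : ℝ) • rootVec n a
            - ∑ a ∈ E.erase (k, l), (γ a : ℝ) • rootVec n a := by
        rw [← Finset.sum_sub_distrib]
        refine Finset.sum_congr rfl fun a _ => ?_
        push_cast
        rw [sub_smul]
      have e2 : ∑ a ∈ E.erase (k, l), (γ a : ℝ) • rootVec n a
          = ∑ a ∈ Lv, (γ a : ℝ) • rootVec n a :=
        (Finset.sum_subset hLvsub (fun b _ hbLv => by
          rw [hγ0 b hbLv, Int.cast_zero, zero_smul])).symm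
      have e3 : ∑ e ∈ Lv, ((γ e : ℝ) • rootVec n (e.1, l) + (γ e : ℝ) • rootVec n (k, e.2))
          = ∑ e ∈ Lv, (γ e : ℝ) • rootVec n e + ((f (k, l) : ℝ)) • rootVec n (k, l) := by
        rw [Finset.sum_congr rfl (fun e _ => hsplit_e e), Finset.sum_add_distrib]
        congr 1
        rw [← Finset.sum_smul]
        congr 1
        rw [← hγsum]
        push_cast
        rfl
      have e4 : ∑ a ∈ E, (f a : ℝ) • rootVec n a
          = ∑ a ∈ E.erase (k, l), (f a : ℝ) • rootVec n a
            + (f (k, l) : ℝ) • rootVec n (k, l) :=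
        (Finset.sum_erase_add E _ hkl).symm
      rw [e1, e2, e3, hx, e4]
      abel
    rw [hA, hxsum]
    exact rfRep_add hx0 hy
  -- arcs of A are non-loops
  have harcA : ∀ a ∈ A, a.1 ≠ a.2 := by
    intro a haA
    rcases hmemA a haA with h | ⟨e, he, rfl⟩ | ⟨e, he, rfl⟩
    · exact hnoloop a (Finset.mem_of_mem_erase h)
    · rcases hT.1 e.1 with hs | hs
      · exact fun h => (hs (k, l) hkl) (by simpa using h.symm)
      · exact absurd rfl (hs e (Finset.mem_filter.mp he).1)
    · rcases hT.1 k with hs | hs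
      · exact fun h => (hs e (Finset.mem_filter.mp he).1) (by simpa using h.symm)
      · exact absurd rfl (hs (k, l) hkl)
  obtain ⟨E', hsub, htree, f', hf'pos, hf'x⟩ :=
    rf_main n hn x zx hzx hgen A.card A rfl harcA hrep
  -- alternation
  have haltA : IsAlternating n A := by
    intro v
    rcases hT.1 v with hv | hv
    · left
      intro b hb
      rcases hmemA b hb with h | ⟨e, he, rfl⟩ | ⟨e, he, rfl⟩
      · exact hv b (Finset.mem_of_mem_erase h)
      · exact hv (k, l) hkl
      · exact hv e (Finset.mem_filter.mp he).1
    · right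
      intro b hb
      rcases hmemA b hb with h | ⟨e, he, rfl⟩ | ⟨e, he, rfl⟩
      · exact hv b (Finset.mem_of_mem_erase h)
      · exact hv e (Finset.mem_filter.mp he).1
      · exact hv (k, l) hkl
  have haltE' : IsAlternating n E' := by
    intro v
    rcases haltA v with hv | hv
    · exact Or.inl fun a ha => hv a (hsub ha)
    · exact Or.inr fun a ha => hv a (hsub ha)
  have hklA : (k, l) ∉ A := by
    intro hmem
    rcases hmemA _ hmem with h | ⟨e, he, heq⟩ | ⟨e, he, heq⟩
    · exact (Finset.mem_erase.mp h).1 rfl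
    · have h1 : k = e.1 := congrArg Prod.fst heq
      exact hk (h1 ▸ (Finset.mem_filter.mp he).2.1)
    · have h2 : l = e.2 := congrArg Prod.snd heq
      exact (Finset.mem_filter.mp he).2.2 (h2 ▸ hl)
  have hent : ∀ a ∈ E', a.2 ∈ I → a.1 ∉ I → a ∈ E := by
    intro a ha h2 h1
    rcases hmemA a (hsub ha) with h | ⟨e, he, rfl⟩ | ⟨e, he, rfl⟩
    · exact Finset.mem_of_mem_erase h
    · exact absurd ((Finset.mem_filter.mp he).2.1) h1
    · exact absurd h2 ((Finset.mem_filter.mp he).2.2)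
  exact ⟨E', ⟨haltE', htree⟩, hent, f', hf'pos, hf'x,
    Or.inl fun hmem => hklA (hsub hmem)⟩
end
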